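/- arXiv:1904.09377 — 7 statements merged into one kernel-verified Lean document; each statement's English description precedes it below -/
import Mathlib

section
/- Let G be a finite simple graph with adjacency matrix A (with natural-number entries), let i, j be vertices and let l ≤ t be natural numbers. The number of walks-with-self-loops of length t from j to i that contain exactly l self-loop steps equals C(t,l) · (A^{t−l})_{j,i}, where C(t,l) is the binomial coefficient. -/
/-!
Split a walk of length `t + 1` at its penultimate vertex `w`: its last step is either a self-loop
(`w = i`, leaving a walk of length `t` with one loop fewer) or an edge `w ~ i` (leaving a walk of
length `t` with the same number of loops). Hence the matrices `M t l` counting walks with `l` loops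
satisfy Pascal's recursion `M (t+1) (l+1) = M t l + M t (l+1) * A`, `M (t+1) 0 = M t 0 * A`,
`M 0 l = [l = 0]`, whose unique solution is the coefficient `C(t, l) • A ^ (t - l)` of `X ^ l`
in `(X + A) ^ t`.
-/

/-- A walk-with-self-loops of length `t` from `j` to `i` in the simple graph `G`:
a map `p : Fin (t+1) → V` with `p 0 = j`, `p t = i`, and every step is either a
self-loop (`p (k+1) = p k`) or an edge of `G`. -/
def IsWalkWithLoops {V : Type*} (G : SimpleGraph V) (t : ℕ) (j i : V)
    (p : Fin (t + 1) → V) : Prop :=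
  p 0 = j ∧ p (Fin.last t) = i ∧
    ∀ k : Fin t, p k.succ = p k.castSucc ∨ G.Adj (p k.castSucc) (p k.succ)

open Finset

theorem eq_choose_smul_pow_of_pascal {R : Type*} [Semiring R] (a : R) (M : ℕ → ℕ → R)
    (hzero : ∀ l, M 0 l = if l = 0 then 1 else 0) (hsucc_zero : ∀ t, M (t + 1) 0 = M t 0 * a)
    (hsucc_succ : ∀ t l, M (t + 1) (l + 1) = M t l + M t (l + 1) * a) (t l : ℕ) :
    M t l = t.choose l • a ^ (t - l) := by
  induction t generalizing l with
  | zero => cases l <;> simp [hzero]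
  | succ t ih =>
    cases l with
    | zero => simp [hsucc_zero, ih, pow_succ]
    | succ l =>
      rw [hsucc_succ, ih, ih, smul_mul_assoc, ← pow_succ, Nat.choose_succ_succ', add_smul]
      rcases Nat.lt_or_ge t (l + 1) with hlt | hle
      · simp [Nat.choose_eq_zero_of_lt hlt]
      · congr 3 <;> omega

namespace IsWalkWithLoops

variable {V : Type*} (G : SimpleGraph V)

instance [DecidableEq V] [DecidableRel G.Adj] (t : ℕ) (j i : V) (p : Fin (t + 1) → V) :
    Decidable (IsWalkWithLoops G t j i p) := by
  unfold IsWalkWithLoops; infer_instance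

theorem zero_iff {j i : V} (p : Fin 1 → V) : IsWalkWithLoops G 0 j i p ↔ p 0 = j ∧ j = i := by
  simp only [IsWalkWithLoops, Fin.last_zero, IsEmpty.forall_iff, and_true]
  grind

theorem succ_iff {t : ℕ} {j i : V} (p : Fin (t + 2) → V) :
    IsWalkWithLoops G (t + 1) j i p ↔
      IsWalkWithLoops G t j (p (Fin.last t).castSucc) (Fin.init p) ∧ p (Fin.last (t + 1)) = i ∧
        (p (Fin.last (t + 1)) = p (Fin.last t).castSucc ∨
          G.Adj (p (Fin.last t).castSucc) (p (Fin.last (t + 1)))) := by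
  unfold IsWalkWithLoops
  rw [Fin.forall_iff_castSucc]
  simp only [Fin.init, Fin.succ_castSucc, Fin.succ_last, Fin.castSucc_zero]
  tauto

end IsWalkWithLoops

def loopCount {V : Type*} [DecidableEq V] {t : ℕ} (p : Fin (t + 1) → V) : ℕ :=
  #{k : Fin t | p k.succ = p k.castSucc}

theorem loopCount_succ {V : Type*} [DecidableEq V] {t : ℕ} (p : Fin (t + 2) → V) :
    loopCount p = loopCount (Fin.init p) +
      if p (Fin.last (t + 1)) = p (Fin.last t).castSucc then 1 else 0 := by
  rw [loopCount, loopCount, card_filter, card_filter, Fin.sum_univ_castSucc]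
  simp only [Fin.init, Fin.succ_castSucc, Fin.succ_last]
  rfl

section Counting

variable {V : Type*} [Fintype V] [DecidableEq V] (G : SimpleGraph V) [DecidableRel G.Adj]

def walksWithLoops (t l : ℕ) (j i : V) : Finset (Fin (t + 1) → V) :=
  {p | IsWalkWithLoops G t j i p ∧ loopCount p = l}

theorem card_filter_walksWithLoops_succ_penultimate (t l : ℕ) (j i w : V) :
    #{p ∈ walksWithLoops G (t + 1) l j i | p (Fin.last t).castSucc = w} =
      #{q : Fin (t + 1) → V | IsWalkWithLoops G t j w q ∧ (i = w ∨ G.Adj w i) ∧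
        loopCount q + (if i = w then 1 else 0) = l} := by
  refine card_bij' (fun p _ => Fin.init p) (fun q _ => Fin.snoc q i) ?_ ?_ ?_ ?_
  · intro p hp
    simp only [walksWithLoops, mem_filter, mem_univ, true_and] at hp ⊢
    obtain ⟨⟨hwalk, hloops⟩, rfl⟩ := hp
    obtain ⟨hinit, rfl, hstep⟩ := (IsWalkWithLoops.succ_iff G p).1 hwalk
    rw [loopCount_succ] at hloops
    exact ⟨hinit, hstep, hloops⟩
  · intro q hq
    simp only [walksWithLoops, mem_filter, mem_univ, true_and] at hq ⊢
    obtain ⟨hwalk, hstep, hloops⟩ := hq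
    have hpen : (Fin.snoc q i : Fin (t + 2) → V) (Fin.last t).castSucc = w := by
      rw [Fin.snoc_castSucc, hwalk.2.1]
    refine ⟨⟨?_, ?_⟩, hpen⟩
    · rw [IsWalkWithLoops.succ_iff, Fin.init_snoc, Fin.snoc_last, hpen]
      exact ⟨hwalk, rfl, hstep⟩
    · rwa [loopCount_succ, Fin.init_snoc, Fin.snoc_last, hpen]
  · intro p hp
    simp only [walksWithLoops, mem_filter, mem_univ, true_and] at hp
    rw [← hp.1.1.2.1]
    exact Fin.snoc_init_self p
  · intro q _
    exact Fin.init_snoc _ _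

theorem card_walksWithLoops_succ (t l : ℕ) (j i : V) :
    #(walksWithLoops G (t + 1) l j i) =
      #{q : Fin (t + 1) → V | IsWalkWithLoops G t j i q ∧ loopCount q + 1 = l} +
        ∑ w, #(walksWithLoops G t l j w) * G.adjMatrix ℕ w i := by
  rw [card_eq_sum_card_fiberwise (fun p _ => mem_univ (p (Fin.last t).castSucc))]
  have hfiber (w : V) :
      #{p ∈ walksWithLoops G (t + 1) l j i | p (Fin.last t).castSucc = w} =
        (if i = w then #{q : Fin (t + 1) → V | IsWalkWithLoops G t j i q ∧ loopCount q + 1 = l}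
          else 0) + #(walksWithLoops G t l j w) * G.adjMatrix ℕ w i := by
    rw [card_filter_walksWithLoops_succ_penultimate]
    by_cases hiw : i = w
    · subst hiw
      simp
    · by_cases hadj : G.Adj w i <;> simp [walksWithLoops, hiw, hadj]
  simp only [hfiber, sum_add_distrib, sum_ite_eq, mem_univ, if_true]

def walkWithLoopsMatrix (t l : ℕ) : Matrix V V ℕ :=
  Matrix.of fun j i => #(walksWithLoops G t l j i)

theorem walkWithLoopsMatrix_zero (l : ℕ) :
    walkWithLoopsMatrix G 0 l = if l = 0 then 1 else 0 := by
  ext j i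
  have hwalks : walksWithLoops G 0 l j i = if j = i ∧ l = 0 then {fun _ => j} else ∅ := by
    ext p
    have hloops : loopCount p = 0 := by simp [loopCount]
    split_ifs with h
    · obtain ⟨rfl, rfl⟩ := h
      simp [walksWithLoops, IsWalkWithLoops.zero_iff, hloops, funext_iff, Fin.forall_fin_one]
    · simp [walksWithLoops, IsWalkWithLoops.zero_iff, hloops]
      grind
  rw [walkWithLoopsMatrix, Matrix.of_apply, hwalks]
  by_cases hl : l = 0 <;> by_cases hji : j = i <;> simp [hl, hji, Matrix.one_apply]

theorem walkWithLoopsMatrix_succ_zero (t : ℕ) :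
    walkWithLoopsMatrix G (t + 1) 0 = walkWithLoopsMatrix G t 0 * G.adjMatrix ℕ := by
  ext j i
  simp [walkWithLoopsMatrix, card_walksWithLoops_succ, Matrix.mul_apply]

theorem walkWithLoopsMatrix_succ_succ (t l : ℕ) :
    walkWithLoopsMatrix G (t + 1) (l + 1) =
      walkWithLoopsMatrix G t l + walkWithLoopsMatrix G t (l + 1) * G.adjMatrix ℕ := by
  ext j i
  simp only [walkWithLoopsMatrix, card_walksWithLoops_succ, Nat.add_right_cancel_iff]
  rfl

theorem walkWithLoopsMatrix_eq (t l : ℕ) :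
    walkWithLoopsMatrix G t l = t.choose l • G.adjMatrix ℕ ^ (t - l) :=
  eq_choose_smul_pow_of_pascal _ _ (walkWithLoopsMatrix_zero G)
    (walkWithLoopsMatrix_succ_zero G) (walkWithLoopsMatrix_succ_succ G) t l

end Counting

theorem card_walksWithLoops_general {V : Type*} [Fintype V] [DecidableEq V]
    (G : SimpleGraph V) [DecidableRel G.Adj] (i j : V) (t l : ℕ) :
    Nat.card {p : Fin (t + 1) → V // IsWalkWithLoops G t j i p ∧
        Nat.card {k : Fin t // p k.succ = p k.castSucc} = l} =
      t.choose l * ((G.adjMatrix ℕ) ^ (t - l)) j i := by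
  have hloops (p : Fin (t + 1) → V) :
      Nat.card {k : Fin t // p k.succ = p k.castSucc} = loopCount p := by
    rw [Nat.card_eq_fintype_card, Fintype.card_subtype, loopCount]
  rw [Nat.subtype_card (walksWithLoops G t l j i) fun p => by
    rw [hloops]; simp [walksWithLoops]]
  exact congrFun₂ (walkWithLoopsMatrix_eq G t l) j i

/-- the number of walks-with-self-loops of length `t` from `j` to `i`
containing exactly `l` self-loop steps equals `C(t, l) * (A ^ (t - l)) j i`, where `A`
is the adjacency matrix of `G`. -/
theorem card_walksWithLoops {V : Type*} [Fintype V] [DecidableEq V]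
    (G : SimpleGraph V) [DecidableRel G.Adj] (i j : V) (t l : ℕ) (hl : l ≤ t) :
    Nat.card {p : Fin (t + 1) → V // IsWalkWithLoops G t j i p ∧
        Nat.card {k : Fin t // p k.succ = p k.castSucc} = l} =
      t.choose l * ((G.adjMatrix ℕ) ^ (t - l)) j i :=
  card_walksWithLoops_general G i j t l
end

section
/- For every real ρ ≥ 1 and every β ∈ [0,1], β·(H(β) + β·log ρ) ≤ log(ρ + 1). Consequently, √(2·log ρ) ≤ sup_{β ∈ (0,1]} √(2β·(H(β) + β·log ρ)) ≤ √(2·log(ρ + 1)). -/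
/-!
Gibbs' inequality `x log y - x log x ≤ y - x`, applied to the pairs `(β, ρ/(ρ+1))` and
`(1-β, 1/(ρ+1))` whose second coordinates sum to `1`, gives `H(β) + β log ρ ≤ log(ρ + 1)`:
the right side is the log-partition function of the weights `ρ` and `1`. For `ρ ≥ 1` the left
side is nonnegative, so the extra factor `β ≤ 1` only decreases it. The supremum is bounded below
by its value `√(2 log ρ)` at `β = 1`.
-/

/-- The binary entropy function `H(β) = −β log β − (1−β) log(1−β)`
(`Real.log 0 = 0` gives the convention `0 · log 0 = 0`). -/
noncomputable def binH (β : ℝ) : ℝ :=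
  -(β * Real.log β) - (1 - β) * Real.log (1 - β)

open Real

lemma mul_log_sub_mul_log_le_sub {x y : ℝ} (hx : 0 ≤ x) (hy : 0 < y) :
    x * log y - x * log x ≤ y - x := by
  rcases hx.eq_or_lt with rfl | hx
  · simpa using hy.le
  calc x * log y - x * log x = x * log (y / x) := by rw [log_div hy.ne' hx.ne']; ring
    _ ≤ x * (y / x - 1) := mul_le_mul_of_nonneg_left (log_le_sub_one_of_pos (by positivity)) hx.le
    _ = y - x := by field_simp

lemma binH_eq_binEntropy : binH = binEntropy := by
  funext β
  simp only [binH, binEntropy, log_inv]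
  ring

lemma binH_nonneg {β : ℝ} (hβ₀ : 0 ≤ β) (hβ₁ : β ≤ 1) : 0 ≤ binH β :=
  binH_eq_binEntropy ▸ binEntropy_nonneg hβ₀ hβ₁

lemma binH_add_mul_log_le_log_add_one {ρ β : ℝ} (hρ : 0 < ρ) (hβ₀ : 0 ≤ β) (hβ₁ : β ≤ 1) :
    binH β + β * log ρ ≤ log (ρ + 1) := by
  have hρ₁ : 0 < ρ + 1 := by linarith
  have h₁ := mul_log_sub_mul_log_le_sub hβ₀ (div_pos hρ hρ₁)
  have h₂ := mul_log_sub_mul_log_le_sub (sub_nonneg.2 hβ₁) (inv_pos.2 hρ₁)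
  rw [log_div hρ.ne' hρ₁.ne'] at h₁
  rw [log_inv] at h₂
  have hsum : ρ / (ρ + 1) + (ρ + 1)⁻¹ = 1 := by field_simp
  unfold binH
  linear_combination h₁ + h₂ + hsum

lemma mul_binH_add_mul_log_le_log_add_one {ρ β : ℝ} (hρ : 1 ≤ ρ) (hβ₀ : 0 ≤ β) (hβ₁ : β ≤ 1) :
    β * (binH β + β * log ρ) ≤ log (ρ + 1) := by
  have hnonneg : 0 ≤ binH β + β * log ρ :=
    add_nonneg (binH_nonneg hβ₀ hβ₁) (mul_nonneg hβ₀ (log_nonneg hρ))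
  calc β * (binH β + β * log ρ) ≤ binH β + β * log ρ := mul_le_of_le_one_left hnonneg hβ₁
    _ ≤ log (ρ + 1) := binH_add_mul_log_le_log_add_one (by linarith) hβ₀ hβ₁

/-- for `ρ ≥ 1` and `β ∈ [0,1]`, `β (H(β) + β log ρ) ≤ log(ρ + 1)`;
consequently `√(2 log ρ) ≤ sup_{β ∈ (0,1]} √(2β (H(β) + β log ρ)) ≤ √(2 log(ρ + 1))`. -/
theorem sup_sqrt_bounds (ρ : ℝ) (hρ : 1 ≤ ρ) :
    (∀ β ∈ Set.Icc (0 : ℝ) 1,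
      β * (binH β + β * Real.log ρ) ≤ Real.log (ρ + 1)) ∧
    Real.sqrt (2 * Real.log ρ) ≤
      (⨆ β : Set.Ioc (0 : ℝ) 1,
        Real.sqrt (2 * β * (binH β + (β : ℝ) * Real.log ρ))) ∧
    (⨆ β : Set.Ioc (0 : ℝ) 1,
        Real.sqrt (2 * β * (binH β + (β : ℝ) * Real.log ρ))) ≤
      Real.sqrt (2 * Real.log (ρ + 1)) := by
  have hbound : ∀ β ∈ Set.Icc (0 : ℝ) 1, β * (binH β + β * log ρ) ≤ log (ρ + 1) :=
    fun β hβ ↦ mul_binH_add_mul_log_le_log_add_one hρ hβ.1 hβ.2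
  have hle : ∀ β : Set.Ioc (0 : ℝ) 1,
      √(2 * β * (binH β + (β : ℝ) * log ρ)) ≤ √(2 * log (ρ + 1)) := fun β ↦
    sqrt_le_sqrt (by rw [mul_assoc]; linarith [hbound β (Set.Ioc_subset_Icc_self β.2)])
  have hone : (1 : ℝ) ∈ Set.Ioc 0 1 := by norm_num
  have : Nonempty (Set.Ioc (0 : ℝ) 1) := ⟨⟨1, hone⟩⟩
  exact ⟨hbound, le_ciSup_of_le ⟨_, Set.forall_mem_range.2 hle⟩ ⟨1, hone⟩ (by simp [binH]),
    ciSup_le hle⟩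
end

section
/- Let G be a finite simple graph on vertex set V with spectral radius ρ, let μ be a probability measure on ℝ with mean 0 whose moment generating function is finite for every γ ≥ 0, with large deviation rate function I. Fix t ≥ 1 and vertices i, j, and equip Ω_t = ({0,…,t−1} × V × V → ℝ) with the finite product probability measure whose coordinates are i.i.d. with law μ. Define the noisy-self-loop maximum M̃_t^{(i,j)}(ω) as the maximum over all walks-with-self-loops p of length t from j to i of ∑_{k<t} ω(k, p(k), p(k+1)) (every step, including self-loop steps, contributes a noise term). Then for every x > 0, the probability of { ω : M̃_t^{(i,j)}(ω) > t·x } is at most ((ρ + 1)·e^{−I(x)})^t. -/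
/-!
Union bound over walks. There are `((A + 1) ^ t) j i ≤ ‖A + 1‖ ^ t ≤ (ρ + 1) ^ t`
walks-with-self-loops from `j` to `i`, and along each of them the `t` noise terms are distinct
coordinates of `ω`, hence i.i.d., so by the Chernoff bound the walk sum exceeds `t x` with
probability at most `e^{-γ t x} M(γ)^t = e^{-t (γ x - log M(γ))}` for every `γ > 0`.
Optimizing over `γ` turns this into `e^{-t I(x)}`.
-/

open MeasureTheory
open scoped ENNReal

/-- The spectral radius of a finite simple graph: the `ℓ² → ℓ²` operator norm of its
adjacency matrix. -/
noncomputable def specRad {V : Type*} [Fintype V] [DecidableEq V] (G : SimpleGraph V)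
    [DecidableRel G.Adj] : ℝ :=
  ‖LinearMap.toContinuousLinearMap (Matrix.toEuclideanLin (G.adjMatrix ℝ))‖

/-- The large deviation rate function `I(y) = sup_{γ > 0} (y·γ − log M(γ))` of `μ`. -/
noncomputable def ldRate (μ : Measure ℝ) (y : ℝ) : ℝ :=
  ⨆ γ : {g : ℝ // 0 < g}, (y * γ - Real.log (∫ v, Real.exp ((γ : ℝ) * v) ∂μ))

/-- The noisy-self-loop maximum `M̃_t^{(i,j)}(ω)`: the maximum over all
walks-with-self-loops `p` of length `t` from `j` to `i` of `∑_{k<t} ω (k, p k, p (k+1))`;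
every step, including self-loop steps, contributes a noise term. -/
noncomputable def pathMaxNoisy {V : Type*} [Fintype V] (G : SimpleGraph V) (t : ℕ)
    (j i : V) (ω : Fin t × V × V → ℝ) : ℝ :=
  ⨆ p : {p : Fin (t + 1) → V // IsWalkWithLoops G t j i p},
    ∑ k : Fin t, ω (k, p.1 k.castSucc, p.1 k.succ)

namespace SimpleGraph

variable {V : Type*} (G : SimpleGraph V)

abbrev WalkWithLoops (t : ℕ) (j i : V) : Type _ :=
  {p : Fin (t + 1) → V // IsWalkWithLoops G t j i p}

def walkWithLoopsSuccEquiv (t : ℕ) (j i : V) :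
    G.WalkWithLoops (t + 1) j i ≃
      {q : Fin (t + 1) → V // (j = q 0 ∨ G.Adj j (q 0)) ∧ IsWalkWithLoops G t (q 0) i q} where
  toFun p := ⟨Fin.tail p.1, by
    obtain ⟨h0, hlast, hstep⟩ := p.2
    refine ⟨?_, rfl, ?_, fun k => ?_⟩
    · simpa [Fin.tail, h0, eq_comm] using hstep 0
    · simpa [Fin.tail] using hlast
    · simpa [Fin.tail, ← Fin.succ_castSucc] using hstep k.succ⟩
  invFun q := ⟨Fin.cons j q.1, by
    obtain ⟨hfirst, -, hlast, hstep⟩ := q.2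
    refine ⟨rfl, by simp [← Fin.succ_last, hlast], Fin.cases ?_ fun k => ?_⟩
    · simpa [eq_comm] using hfirst
    · simp [hstep k]⟩
  left_inv p := Subtype.ext (by simp [← p.2.1])
  right_inv q := rfl

variable [DecidableEq V] [DecidableRel G.Adj]

theorem adjMatrix_add_one_apply {R : Type*} [Semiring R] (j m : V) :
    (G.adjMatrix R + 1) j m = if j = m ∨ G.Adj j m then 1 else 0 := by
  by_cases h : j = m <;> simp [h]

variable [Fintype V]

theorem natCard_walkWithLoops (R : Type*) [Semiring R] (t : ℕ) (j i : V) :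
    (Nat.card (G.WalkWithLoops t j i) : R) = ((G.adjMatrix R + 1) ^ t) j i := by
  classical
  induction t generalizing j with
  | zero =>
    by_cases h : j = i
    · subst h
      have : Unique (G.WalkWithLoops 0 j j) :=
        ⟨⟨⟨fun _ => j, rfl, rfl, Fin.elim0⟩⟩, fun p => Subtype.ext (funext fun k => by
          simpa [Fin.fin_one_eq_zero k] using p.2.1)⟩
      simp
    · have : IsEmpty (G.WalkWithLoops 0 j i) := ⟨fun p => h (p.2.1.symm.trans p.2.2.1)⟩
      simp [h]
  | succ t ih =>
    rw [Nat.card_congr (G.walkWithLoopsSuccEquiv t j i), Nat.card_eq_fintype_card,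
      Fintype.card_subtype, Finset.card_eq_sum_card_fiberwise (f := fun q => q 0)
        (t := Finset.univ) fun _ _ => Finset.mem_univ _,
      Nat.cast_sum, pow_succ', Matrix.mul_apply]
    refine Finset.sum_congr rfl fun m _ => ?_
    rw [adjMatrix_add_one_apply, ← ih m, Nat.card_eq_fintype_card, Fintype.card_subtype]
    split_ifs with hm
    · rw [one_mul]
      congr 2
      ext q
      simp only [Finset.mem_filter, Finset.mem_univ, true_and]
      constructor
      · rintro ⟨⟨-, -, hw⟩, rfl⟩
        exact ⟨rfl, hw⟩
      · rintro ⟨rfl, hw⟩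
        exact ⟨⟨hm, rfl, hw⟩, rfl⟩
    · rw [zero_mul, Finset.card_eq_zero.2 (Finset.filter_eq_empty_iff.2 ?_), Nat.cast_zero]
      rintro q hq rfl
      exact hm (Finset.mem_filter.1 hq).2.1

end SimpleGraph

section L2OpNorm

open Matrix
open scoped Matrix.Norms.L2Operator

theorem Matrix.norm_apply_le_l2_opNorm {𝕜 m n : Type*} [RCLike 𝕜] [Fintype m] [Fintype n]
    [DecidableEq n] (A : Matrix m n 𝕜) (a : m) (b : n) : ‖A a b‖ ≤ ‖A‖ := by
  have h := A.l2_opNorm_mulVec (EuclideanSpace.single b 1)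
  rw [PiLp.norm_single, norm_one, mul_one] at h
  refine le_trans (le_of_eq ?_) ((PiLp.norm_apply_le _ a).trans h)
  simp [Matrix.mulVec_single]

variable {V : Type*} [Fintype V] [DecidableEq V] (G : SimpleGraph V) [DecidableRel G.Adj]

theorem specRad_nonneg : 0 ≤ specRad G := norm_nonneg _

theorem norm_adjMatrix_add_one_le : ‖G.adjMatrix ℝ + 1‖ ≤ specRad G + 1 := by
  refine (norm_add_le _ _).trans (add_le_add le_rfl ?_)
  rw [Matrix.cstar_norm_def, map_one]
  exact ContinuousLinearMap.norm_id_le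

theorem adjMatrix_add_one_pow_apply_le (t : ℕ) (a b : V) :
    ((G.adjMatrix ℝ + 1) ^ t) a b ≤ (specRad G + 1) ^ t := by
  rcases t.eq_zero_or_pos with rfl | ht
  · simp only [pow_zero, Matrix.one_apply]
    split_ifs <;> norm_num
  calc ((G.adjMatrix ℝ + 1) ^ t) a b ≤ ‖(G.adjMatrix ℝ + 1) ^ t‖ :=
        (Real.le_norm_self _).trans (Matrix.norm_apply_le_l2_opNorm _ a b)
    _ ≤ ‖G.adjMatrix ℝ + 1‖ ^ t := norm_pow_le' _ ht
    _ ≤ (specRad G + 1) ^ t := by gcongr; exact norm_adjMatrix_add_one_le G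

theorem natCard_walkWithLoops_le (t : ℕ) (j i : V) :
    (Nat.card (G.WalkWithLoops t j i) : ℝ) ≤ (specRad G + 1) ^ t :=
  G.natCard_walkWithLoops ℝ t j i ▸ adjMatrix_add_one_pow_apply_le G t j i

end L2OpNorm

theorem measure_lt_iSup_le_natCard_mul {Ω ι : Type*} [MeasurableSpace Ω] [Finite ι]
    (μ : Measure Ω) (f : ι → Ω → ℝ) {a : ℝ} (ha : 0 ≤ a) {ε : ℝ≥0∞}
    (h : ∀ i, μ {ω | a < f i ω} ≤ ε) :
    μ {ω | a < ⨆ i, f i ω} ≤ Nat.card ι * ε := by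
  have := Fintype.ofFinite ι
  have hsub : {ω | a < ⨆ i, f i ω} ⊆ ⋃ i, {ω | a < f i ω} := fun ω hω => by
    by_contra hω'
    simp only [Set.mem_iUnion, Set.mem_ofPred_eq, not_exists, not_lt] at hω'
    exact hω.not_ge (Real.iSup_le hω' ha)
  calc μ {ω | a < ⨆ i, f i ω} ≤ ∑ i, μ {ω | a < f i ω} :=
        (measure_mono hsub).trans (measure_iUnion_fintype_le _ _)
    _ ≤ ∑ _i : ι, ε := Finset.sum_le_sum fun i _ => h i
    _ = Nat.card ι * ε := by simp [Nat.card_eq_fintype_card]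

open ProbabilityTheory Real in
theorem measure_lt_sum_comp_le_exp_mul_mgf_pow {ι κ : Type*} [Fintype ι] [Fintype κ]
    (μ : Measure ℝ) [IsProbabilityMeasure μ] {c : κ → ι} (hc : Function.Injective c)
    {γ : ℝ} (hγ : 0 ≤ γ) (hint : Integrable (fun v => exp (γ * v)) μ) (a : ℝ) :
    Measure.pi (fun _ : ι => μ) {ω | a < ∑ k, ω (c k)} ≤
      ENNReal.ofReal (exp (-γ * a) * mgf id μ γ ^ Fintype.card κ) := by
  set P := Measure.pi fun _ : ι => μ
  set X : κ → (ι → ℝ) → ℝ := fun k ω => ω (c k)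
  have hX : ∀ k, Measurable (X k) := fun k => measurable_pi_apply (c k)
  have hlaw : ∀ k, P.map (X k) = μ := fun k => (measurePreserving_eval _ (c k)).map_eq
  have hindep : iIndepFun X P :=
    (iIndepFun_pi (X := fun _ => id) fun _ => aemeasurable_id).precomp hc
  have hint' : Integrable (fun ω => exp (γ * (∑ k, X k) ω)) P :=
    hindep.integrable_exp_mul_sum hX fun k _ =>
      (measurePreserving_eval (fun _ => μ) (c k)).integrable_comp_of_integrable hint
  have hmgf : mgf (∑ k, X k) P γ = mgf id μ γ ^ Fintype.card κ := by
    rw [hindep.mgf_sum hX, ← Finset.card_univ, ← Finset.prod_const]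
    exact Finset.prod_congr rfl fun k _ => by rw [← mgf_id_map (hX k).aemeasurable, hlaw k]
  have hsub : {ω | a < ∑ k, ω (c k)} ⊆ {ω | a ≤ (∑ k, X k) ω} := fun ω hω => by
    simpa [X] using hω.le
  calc P {ω | a < ∑ k, ω (c k)} ≤ P {ω | a ≤ (∑ k, X k) ω} := measure_mono hsub
    _ = ENNReal.ofReal (P.real {ω | a ≤ (∑ k, X k) ω}) := (ofReal_measureReal).symm
    _ ≤ _ := ENNReal.ofReal_le_ofReal (hmgf ▸ measure_ge_le_exp_mul_mgf a hγ hint')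

open Real in
theorem le_ofReal_mul_exp_neg_mul_iSup {ι : Sort*} [Nonempty ι] {f : ι → ℝ}
    (hf : BddAbove (Set.range f)) {p : ℝ≥0∞} {C s : ℝ} (hC : 0 ≤ C) (hs : 0 ≤ s)
    (h : ∀ i, p ≤ ENNReal.ofReal (C * exp (-(s * f i)))) :
    p ≤ ENNReal.ofReal (C * exp (-(s * ⨆ i, f i))) := by
  have hanti : Antitone fun y => ENNReal.ofReal (C * exp (-(s * y))) := fun y z hyz =>
    ENNReal.ofReal_le_ofReal <| mul_le_mul_of_nonneg_left
      (exp_le_exp.2 (neg_le_neg (mul_le_mul_of_nonneg_left hyz hs))) hC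
  have hcont : Continuous fun y => ENNReal.ofReal (C * exp (-(s * y))) :=
    ENNReal.continuous_ofReal.comp (by fun_prop)
  rw [hanti.map_ciSup_of_continuousAt hcont.continuousAt hf]
  exact le_iInf h

open Real ProbabilityTheory in
theorem measure_lt_pathMaxNoisy_le {V : Type*} [Fintype V] [DecidableEq V]
    (G : SimpleGraph V) [DecidableRel G.Adj] (μ : Measure ℝ) [IsProbabilityMeasure μ] {γ : ℝ}
    (hγ : 0 ≤ γ) (hint : Integrable (fun v => exp (γ * v)) μ) (t : ℕ) (i j : V) {x : ℝ}
    (hx : 0 ≤ x) :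
    Measure.pi (fun _ : Fin t × V × V => μ) {ω | (t : ℝ) * x < pathMaxNoisy G t j i ω} ≤
      ENNReal.ofReal ((specRad G + 1) ^ t * exp (-(t * (x * γ - log (mgf id μ γ))))) := by
  have hexp :
      exp (-(t * (x * γ - log (mgf id μ γ)))) = exp (-γ * (t * x)) * mgf id μ γ ^ t := by
    rw [show -(t * (x * γ - log (mgf id μ γ))) = -γ * (t * x) + t * log (mgf id μ γ) by ring,
      exp_add, exp_nat_mul, exp_log (mgf_pos (X := id) hint)]
  calc _ ≤ Nat.card (G.WalkWithLoops t j i) *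
        ENNReal.ofReal (exp (-(t * (x * γ - log (mgf id μ γ))))) :=
        measure_lt_iSup_le_natCard_mul _ _ (by positivity) fun p => hexp ▸ by
          simpa using measure_lt_sum_comp_le_exp_mul_mgf_pow μ
            (c := fun k : Fin t => (k, p.1 k.castSucc, p.1 k.succ))
            (fun k l hkl => congrArg Prod.fst hkl) hγ hint (t * x)
    _ ≤ _ := by
        rw [← ENNReal.ofReal_natCast, ← ENNReal.ofReal_mul (Nat.cast_nonneg _)]
        gcongr
        exact natCard_walkWithLoops_le G t j i

open Real ProbabilityTheory in
theorem pathMaxNoisy_tail_bound_general {V : Type*} [Fintype V] [DecidableEq V]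
    (G : SimpleGraph V) [DecidableRel G.Adj]
    (μ : Measure ℝ) [IsProbabilityMeasure μ]
    (hmgf : ∀ γ : ℝ, 0 ≤ γ → Integrable (fun v => Real.exp (γ * v)) μ)
    (t : ℕ) (i j : V) (x : ℝ) (hx : 0 < x) :
    Measure.pi (fun _ : Fin t × V × V => μ) {ω | (t : ℝ) * x < pathMaxNoisy G t j i ω} ≤
      ENNReal.ofReal (((specRad G + 1) * Real.exp (-(ldRate μ x))) ^ t) := by
  set f : {g : ℝ // 0 < g} → ℝ := fun γ => x * γ - log (mgf id μ γ)
  have hρ : 1 ≤ specRad G + 1 := by linarith [specRad_nonneg G]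
  by_cases hf : BddAbove (Set.range f)
  · have := le_ofReal_mul_exp_neg_mul_iSup hf (pow_nonneg (zero_le_one.trans hρ) t)
      t.cast_nonneg fun γ => measure_lt_pathMaxNoisy_le G μ γ.2.le (hmgf γ γ.2.le) t i j hx.le
    rwa [mul_pow, ← exp_nat_mul, mul_neg]
  · -- `ldRate μ x` is then the junk value `0`, and the trivial bound `1` suffices.
    have hI : ldRate μ x = 0 := Real.iSup_of_not_bddAbove hf
    rw [hI, neg_zero, exp_zero, mul_one]
    exact prob_le_one.trans (ENNReal.one_le_ofReal.2 (one_le_pow₀ hρ))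

/-- under the i.i.d. product noise measure, for every `x > 0`,
`P[M̃_t^{(i,j)} > t·x] ≤ ((ρ + 1) e^{−I(x)})^t`. -/
theorem pathMaxNoisy_tail_bound {V : Type*} [Fintype V] [DecidableEq V]
    (G : SimpleGraph V) [DecidableRel G.Adj]
    (μ : Measure ℝ) [IsProbabilityMeasure μ] (hmean : ∫ v, v ∂μ = 0)
    (hmgf : ∀ γ : ℝ, 0 ≤ γ → Integrable (fun v => Real.exp (γ * v)) μ)
    (t : ℕ) (ht : 1 ≤ t) (i j : V) (x : ℝ) (hx : 0 < x) :
    Measure.pi (fun _ : Fin t × V × V => μ) {ω | (t : ℝ) * x < pathMaxNoisy G t j i ω} ≤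
      ENNReal.ofReal (((specRad G + 1) * Real.exp (-(ldRate μ x))) ^ t) :=
  pathMaxNoisy_tail_bound_general G μ hmgf t i j x hx
end

section
/- Let G be a d-regular finite simple graph on vertex set V with d ≥ 1, and let μ be a probability measure on ℝ with finite first moment. Fix a vertex i. Then for almost every ω in the i.i.d. noise field, liminf_{t→∞} (1/t)·max_{j ∈ V} M_t^{(i,j)}(ω) ≥ m₊(d). -/
open MeasureTheory Filter

/-- `M_t^{(i,j)}(ω)` for a noise field `ω : ℕ × V × V → ℝ`. -/
noncomputable def pathMaxInf {V : Type*} [Fintype V] [DecidableEq V] (G : SimpleGraph V)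
    (t : ℕ) (j i : V) (ω : ℕ × V × V → ℝ) : ℝ :=
  ⨆ p : {p : Fin (t + 1) → V // IsWalkWithLoops G t j i p},
    ∑ k : Fin t, if p.1 k.castSucc = p.1 k.succ then 0
      else ω ((k : ℕ), p.1 k.castSucc, p.1 k.succ)

/-- `m₊(d)`: the expectation of the positive part of the maximum of `d` i.i.d. samples
from `μ`. -/
noncomputable def mPlus (μ : Measure ℝ) (d : ℕ) : ℝ :=
  ∫ y, max 0 (⨆ r : Fin d, y r) ∂(Measure.pi fun _ : Fin d => μ)

/-!
The greedy walk started at `i` moves, at each time step, along the heaviest of the `d` edges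
leaving its current vertex if that weight is positive, and stays put otherwise. Its gain at time
`k` is the positive part of the maximum of the `d` weights at time `k` on the edges out of a
vertex that is determined by the noise before time `k`; so the gains are i.i.d. with mean `m₊(d)`
and obey the strong law of large numbers. After `t - D` greedy steps, where `D` bounds the graph
distance to `i` in its component, a geodesic leads back to `i` within the remaining `D` steps,
losing at most the total absolute noise of `D` time slices, which is `o(t)` by the strong law
applied to the slice sums. The same slice sums bound `max_j M_t^{(i,j)}` from above, which keeps
the `liminf` from being a junk value.
-/

open ProbabilityTheory Finset Topology

section Argmax

variable {ι : Type*} [Fintype ι] [LinearOrder ι] [Nonempty ι]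

noncomputable def argmax (x : ι → ℝ) : ι :=
  (univ.filter fun r => ∀ s, x s ≤ x r).min' <| by
    obtain ⟨r, -, hr⟩ := exists_max_image univ x univ_nonempty
    exact ⟨r, mem_filter.mpr ⟨mem_univ r, fun s => hr s (mem_univ s)⟩⟩

theorem le_apply_argmax (x : ι → ℝ) (s : ι) : x s ≤ x (argmax x) :=
  (mem_filter.mp (min'_mem (univ.filter fun r => ∀ s, x s ≤ x r) _)).2 s

theorem argmax_eq_iff (x : ι → ℝ) (r : ι) :
    argmax x = r ↔ (∀ s, x s ≤ x r) ∧ ∀ r' < r, ∃ s, x r' < x s := by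
  simp only [argmax, min'_eq_iff, mem_filter, mem_univ, true_and]
  refine and_congr_right fun _ => ⟨fun h r' hr' => ?_, fun h r' hr' => ?_⟩
  · by_contra! hmax
    exact (h r' hmax).not_gt hr'
  · by_contra! hlt
    obtain ⟨s, hs⟩ := h r' hlt
    exact (hr' s).not_gt hs

theorem iSup_eq_apply_argmax (x : ι → ℝ) : ⨆ r, x r = x (argmax x) :=
  le_antisymm (ciSup_le (le_apply_argmax x)) (le_ciSup (Set.finite_range x).bddAbove _)

theorem measurable_argmax [MeasurableSpace ι] : Measurable (argmax : (ι → ℝ) → ι) := by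
  refine measurable_to_countable' fun r => ?_
  have hfiber : argmax ⁻¹' {r} =
      (⋂ s, {x : ι → ℝ | x s ≤ x r}) ∩ ⋂ r' ∈ Set.Iio r, ⋃ s, {x | x r' < x s} := by
    ext x
    simp [argmax_eq_iff]
  rw [hfiber]
  exact (MeasurableSet.iInter fun s =>
      measurableSet_le (measurable_pi_apply s) (measurable_pi_apply r)).inter
    (.biInter (Set.to_countable _) fun r' _ => .iUnion fun s =>
      measurableSet_lt (measurable_pi_apply r') (measurable_pi_apply s))

end Argmax

/-- `mPlus μ d` is the mean of `posSup` under `μ^{⊗d}`. -/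
noncomputable def posSup {ι : Type*} (y : ι → ℝ) : ℝ := max 0 (⨆ r, y r)

theorem measurable_posSup {ι : Type*} [Countable ι] : Measurable (posSup : (ι → ℝ) → ℝ) :=
  measurable_const.max (Measurable.iSup measurable_pi_apply)

theorem Filter.Tendsto.div_natCast_comp_sub {u : ℕ → ℝ} {m : ℝ} (D : ℕ)
    (hu : Tendsto (fun n : ℕ => u n / n) atTop (𝓝 m)) :
    Tendsto (fun n : ℕ => u (n - D) / n) atTop (𝓝 m) := by
  rw [← tendsto_add_atTop_iff_nat D]
  have h := hu.mul (tendsto_natCast_div_add_atTop (D : ℝ))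
  rw [mul_one] at h
  refine h.congr' ?_
  filter_upwards [eventually_gt_atTop 0] with n hn
  have : (n : ℝ) ≠ 0 := by positivity
  simp only [Nat.add_sub_cancel, Nat.cast_add]
  field_simp

theorem le_liminf_div_of_sum_bounds {Y W A : ℕ → ℝ} {m c : ℝ} (D : ℕ)
    (hY : Tendsto (fun n : ℕ => (∑ k ∈ range n, Y k) / n) atTop (𝓝 m))
    (hW : Tendsto (fun n : ℕ => (∑ k ∈ range n, W k) / n) atTop (𝓝 c))
    (hlow : ∀ t, D ≤ t → ∑ k ∈ range (t - D), Y k - ∑ k ∈ Ico (t - D) t, W k ≤ A t)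
    (hup : ∀ t, A t ≤ ∑ k ∈ range t, W k) :
    m ≤ liminf (fun t : ℕ => A t / t) atTop := by
  set S := fun n => ∑ k ∈ range n, Y k
  set T := fun n => ∑ k ∈ range n, W k
  have hlim : Tendsto (fun t : ℕ => S (t - D) / t - (T t / t - T (t - D) / t)) atTop (𝓝 m) := by
    simpa using (hY.div_natCast_comp_sub D).sub (hW.sub (hW.div_natCast_comp_sub D))
  have hle : ∀ᶠ t : ℕ in atTop, S (t - D) / t - (T t / t - T (t - D) / t) ≤ A t / t := by
    filter_upwards [eventually_ge_atTop D] with t ht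
    rw [← sub_div, ← sub_div, ← sum_Ico_eq_sub _ (Nat.sub_le t D)]
    exact div_le_div_of_nonneg_right (hlow t ht) t.cast_nonneg
  have hcobdd : IsCoboundedUnder (· ≥ ·) atTop fun t : ℕ => A t / t := by
    refine isCoboundedUnder_ge_of_eventually_le atTop (x := c + 1) ?_
    filter_upwards [hW.eventually_le_const (lt_add_one c)] with t ht
    exact (div_le_div_of_nonneg_right (hup t) t.cast_nonneg).trans ht
  calc m = liminf (fun t : ℕ => S (t - D) / t - (T t / t - T (t - D) / t)) atTop :=
        hlim.liminf_eq.symm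
    _ ≤ liminf (fun t : ℕ => A t / t) atTop := liminf_le_liminf hle hlim.isBoundedUnder_ge hcobdd

theorem preimage_select_eq_iUnion {Ω ι β : Type*} (U : Ω → ι) (Z : ι → Ω → β) (s : Set β) :
    (fun ω => Z (U ω) ω) ⁻¹' s = ⋃ v, U ⁻¹' {v} ∩ Z v ⁻¹' s := by
  ext ω
  simp

section Selection

variable {Ω ι β : Type*} [MeasurableSpace β] [MeasurableSpace ι] [MeasurableSingletonClass ι]
  [Countable ι]

theorem measurable_select {m : MeasurableSpace Ω} {U : Ω → ι} (hU : Measurable U)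
    {Z : ι → Ω → β} (hZ : ∀ v, Measurable (Z v)) : Measurable fun ω => Z (U ω) ω := by
  intro s hs
  rw [preimage_select_eq_iUnion]
  exact .iUnion fun v => (hU (measurableSet_singleton v)).inter (hZ v hs)

theorem measure_inter_preimage_select {m₁ m₂ : MeasurableSpace Ω} {mΩ : MeasurableSpace Ω}
    {P : Measure Ω} (h₁ : m₁ ≤ mΩ) (h₂ : m₂ ≤ mΩ) (hind : Indep m₁ m₂ P)
    {U : Ω → ι} (hU : Measurable[m₁] U) {Z : ι → Ω → β} (hZ : ∀ v, Measurable[m₂] (Z v))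
    {ν : Measure β} (hν : ∀ v, P.map (Z v) = ν) {A : Set Ω} (hA : MeasurableSet[m₁] A)
    {s : Set β} (hs : MeasurableSet s) :
    P (A ∩ (fun ω => Z (U ω) ω) ⁻¹' s) = P A * ν s := by
  have hfiber : ∀ v, MeasurableSet[m₁] (A ∩ U ⁻¹' {v}) :=
    fun v => hA.inter (hU (measurableSet_singleton v))
  have hdisj : Pairwise (Function.onFun Disjoint fun v => A ∩ U ⁻¹' {v}) :=
    fun v w hvw => ((Set.disjoint_singleton.mpr hvw).preimage U).mono Set.inter_subset_right
      Set.inter_subset_right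
  have hZs : ∀ v, P (Z v ⁻¹' s) = ν s := fun v => by
    rw [← hν v, Measure.map_apply ((hZ v).mono h₂ le_rfl) hs]
  calc P (A ∩ (fun ω => Z (U ω) ω) ⁻¹' s) = P (⋃ v, A ∩ U ⁻¹' {v} ∩ Z v ⁻¹' s) := by
        rw [preimage_select_eq_iUnion, Set.inter_iUnion]
        simp_rw [Set.inter_assoc]
    _ = ∑' v, P (A ∩ U ⁻¹' {v}) * ν s := by
        rw [measure_iUnion (fun v w hvw => (hdisj hvw).mono Set.inter_subset_left
          Set.inter_subset_left) fun v => (h₁ _ (hfiber v)).inter (h₂ _ (hZ v hs))]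
        simp_rw [(Indep_iff _ _ _).mp hind _ _ (hfiber _) (hZ _ hs), hZs]
    _ = P A * ν s := by
        rw [ENNReal.tsum_mul_right, ← measure_iUnion hdisj fun v => h₁ _ (hfiber v),
          ← Set.inter_iUnion, ← Set.preimage_iUnion, Set.iUnion_singleton_eq_range,
          Set.range_id', Set.preimage_univ, Set.inter_univ]

end Selection

section CoordSigma

variable {ι β : Type*} [mβ : MeasurableSpace β]

abbrev coordSigma (S : Set ι) : MeasurableSpace (ι → β) := ⨆ c ∈ S, mβ.comap fun ω => ω c

theorem coordSigma_le (S : Set ι) :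
    coordSigma S ≤ (MeasurableSpace.pi : MeasurableSpace (ι → β)) :=
  iSup₂_le fun c _ => (measurable_pi_apply c).comap_le

theorem coordSigma_mono {S T : Set ι} (h : S ⊆ T) :
    (coordSigma S : MeasurableSpace (ι → β)) ≤ coordSigma T :=
  biSup_mono h

theorem measurable_coordSigma_apply {S : Set ι} {c : ι} (hc : c ∈ S) :
    Measurable[coordSigma S] fun ω : ι → β => ω c :=
  Measurable.of_comap_le (le_iSup₂ (f := fun c (_ : c ∈ S) => mβ.comap fun ω : ι → β => ω c) c hc)

variable {P : Measure (ι → β)}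

theorem indep_coordSigma (hindep : iIndepFun (fun c (ω : ι → β) => ω c) P) {S T : Set ι}
    (hST : Disjoint S T) : Indep (coordSigma S) (coordSigma T) P :=
  indep_iSup_of_disjoint (fun c => (measurable_pi_apply c).comap_le) hindep.iIndep hST

theorem map_coords_eq_pi [IsProbabilityMeasure P]
    (hindep : iIndepFun (fun c (ω : ι → β) => ω c) P) {μ : Measure β}
    (hlaw : ∀ c, P.map (fun ω => ω c) = μ) {κ : Type*} [Fintype κ] {e : κ → ι}
    (he : Function.Injective e) :
    P.map (fun ω r => ω (e r)) = Measure.pi fun _ : κ => μ := by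
  rw [(iIndepFun_iff_map_fun_eq_pi_map fun r => (measurable_pi_apply (e r)).aemeasurable).mp
    (hindep.precomp he)]
  simp only [hlaw]

end CoordSigma

theorem SimpleGraph.Walk.getVert_succ_eq_or_adj {V : Type*} {G : SimpleGraph V} {u v : V}
    (w : G.Walk u v) (m : ℕ) :
    w.getVert (m + 1) = w.getVert m ∨ G.Adj (w.getVert m) (w.getVert (m + 1)) := by
  by_cases hm : m < w.length
  · exact .inr (w.adj_getVert_succ hm)
  · left
    rw [w.getVert_of_length_le (by omega), w.getVert_of_length_le (by omega)]

section Walks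

variable {V : Type*} [Fintype V]

def sliceAbsSum (k : ℕ) (ω : ℕ × V × V → ℝ) : ℝ := ∑ uv : V × V, |ω (k, uv.1, uv.2)|

theorem sliceAbsSum_nonneg (k : ℕ) (ω : ℕ × V × V → ℝ) : 0 ≤ sliceAbsSum k ω :=
  sum_nonneg fun _ _ => abs_nonneg _

variable {μ : Measure ℝ} {P : Measure (ℕ × V × V → ℝ)}

theorem measurable_sliceAbsSum (k : ℕ) :
    Measurable[coordSigma {c : ℕ × V × V | c.1 = k}] (sliceAbsSum k) :=
  Finset.measurable_sum _ fun uv _ => continuous_abs.measurable.comp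
    (measurable_coordSigma_apply (S := {c : ℕ × V × V | c.1 = k}) (c := (k, uv.1, uv.2)) rfl)

theorem integrable_sliceAbsSum (hlaw : ∀ c, P.map (fun ω => ω c) = μ) (hint : Integrable id μ)
    (k : ℕ) : Integrable (sliceAbsSum k) P := by
  refine integrable_finsetSum _ fun uv _ => Integrable.abs ?_
  rw [← hlaw (k, uv.1, uv.2)] at hint
  exact hint.comp_measurable (measurable_pi_apply _)

theorem identDistrib_sliceAbsSum [IsProbabilityMeasure P]
    (hindep : iIndepFun (fun c (ω : ℕ × V × V → ℝ) => ω c) P)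
    (hlaw : ∀ c, P.map (fun ω => ω c) = μ) (k : ℕ) :
    IdentDistrib (sliceAbsSum k) (sliceAbsSum 0) P P := by
  have hslice : ∀ k, P.map (fun (ω : ℕ × V × V → ℝ) (uv : V × V) => ω (k, uv.1, uv.2)) =
      Measure.pi fun _ => μ :=
    fun k => map_coords_eq_pi hindep hlaw fun a b h =>
      Prod.ext (congrArg (·.2.1) h) (congrArg (·.2.2) h)
  have hmeas : ∀ k, Measurable fun (ω : ℕ × V × V → ℝ) (uv : V × V) => ω (k, uv.1, uv.2) :=
    fun k => measurable_pi_lambda _ fun _ => measurable_pi_apply _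
  have hident : IdentDistrib (fun (ω : ℕ × V × V → ℝ) (uv : V × V) => ω (k, uv.1, uv.2))
      (fun ω uv => ω (0, uv.1, uv.2)) P P :=
    ⟨(hmeas k).aemeasurable, (hmeas 0).aemeasurable, (hslice k).trans (hslice 0).symm⟩
  exact hident.comp (Finset.measurable_sum _ fun uv _ => (measurable_pi_apply uv).abs)

theorem pairwise_indepFun_sliceAbsSum
    (hindep : iIndepFun (fun c (ω : ℕ × V × V → ℝ) => ω c) P) :
    Pairwise fun j k => sliceAbsSum j ⟂ᵢ[P] sliceAbsSum (V := V) k := by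
  intro j k hjk
  rw [IndepFun_iff_Indep]
  exact indep_of_indep_of_le
    (indep_coordSigma hindep (Set.disjoint_left.mpr fun c hj hk => hjk (hj.symm.trans hk)))
    (measurable_sliceAbsSum j).comap_le (measurable_sliceAbsSum k).comap_le

variable [DecidableEq V]

def stepWeight (ω : ℕ × V × V → ℝ) (k : ℕ) (u v : V) : ℝ := if u = v then 0 else ω (k, u, v)

theorem abs_stepWeight_le_sliceAbsSum (ω : ℕ × V × V → ℝ) (k : ℕ) (u v : V) :
    |stepWeight ω k u v| ≤ sliceAbsSum k ω := by
  unfold stepWeight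
  split_ifs
  · simpa using sliceAbsSum_nonneg k ω
  · exact single_le_sum (f := fun uv : V × V => |ω (k, uv.1, uv.2)|)
      (fun _ _ => abs_nonneg _) (mem_univ (u, v))

theorem le_pathMaxInf_of_steps (G : SimpleGraph V) {t : ℕ} {i j : V} (ω : ℕ × V × V → ℝ)
    (p : ℕ → V) (h0 : p 0 = j) (ht : p t = i)
    (hstep : ∀ k, p (k + 1) = p k ∨ G.Adj (p k) (p (k + 1))) :
    ∑ k ∈ range t, stepWeight ω k (p k) (p (k + 1)) ≤ pathMaxInf G t j i ω := by
  have hwalk : IsWalkWithLoops G t j i (fun k : Fin (t + 1) => p k) :=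
    ⟨h0, ht, fun k => hstep k⟩
  rw [← Fin.sum_univ_eq_sum_range (fun k => stepWeight ω k (p k) (p (k + 1)))]
  unfold pathMaxInf
  exact le_ciSup_of_le (Set.finite_range _).bddAbove ⟨_, hwalk⟩ le_rfl

theorem pathMaxInf_le_sum_sliceAbsSum (G : SimpleGraph V) (t : ℕ) (j i : V)
    (ω : ℕ × V × V → ℝ) : pathMaxInf G t j i ω ≤ ∑ k ∈ range t, sliceAbsSum k ω := by
  unfold pathMaxInf
  refine Real.iSup_le (fun p => ?_) (sum_nonneg fun k _ => sliceAbsSum_nonneg k ω)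
  rw [← Fin.sum_univ_eq_sum_range (fun k => sliceAbsSum k ω)]
  exact sum_le_sum fun k _ =>
    (le_abs_self _).trans (abs_stepWeight_le_sliceAbsSum ω k (p.1 k.castSucc) (p.1 k.succ))

end Walks

namespace SimpleGraph.IsRegularOfDegree

variable {V : Type*} [Fintype V] {G : SimpleGraph V} [DecidableRel G.Adj] {d : ℕ}
  (hG : G.IsRegularOfDegree d) {μ : Measure ℝ} {P : Measure (ℕ × V × V → ℝ)}

noncomputable def neighbor (v : V) (r : Fin d) : V :=
  ((G.neighborFinset v).equivFinOfCardEq ((G.card_neighborFinset_eq_degree v).trans (hG v))).symm r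

theorem adj_neighbor (v : V) (r : Fin d) : G.Adj v (hG.neighbor v r) :=
  (G.mem_neighborFinset v _).mp (Subtype.prop _)

theorem neighbor_injective (v : V) : Function.Injective (hG.neighbor v) :=
  Subtype.coe_injective.comp (Equiv.injective _)

noncomputable def edgeRow (k : ℕ) (v : V) (ω : ℕ × V × V → ℝ) : Fin d → ℝ :=
  fun r => ω (k, v, hG.neighbor v r)

theorem measurable_edgeRow {k : ℕ} {S : Set (ℕ × V × V)} (hS : ∀ c : ℕ × V × V, c.1 = k → c ∈ S)
    (v : V) : Measurable[coordSigma S] (hG.edgeRow k v) :=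
  @measurable_pi_lambda _ _ _ (coordSigma S) _ _ fun r =>
    measurable_coordSigma_apply (hS (k, v, hG.neighbor v r) rfl)

theorem map_edgeRow [IsProbabilityMeasure P]
    (hindep : iIndepFun (fun c (ω : ℕ × V × V → ℝ) => ω c) P)
    (hlaw : ∀ c, P.map (fun ω => ω c) = μ) (k : ℕ) (v : V) :
    P.map (hG.edgeRow k v) = Measure.pi fun _ => μ :=
  map_coords_eq_pi hindep hlaw fun _ _ h => hG.neighbor_injective v (congrArg (·.2.2) h)

variable [NeZero d]

noncomputable def greedyStep (v : V) (x : Fin d → ℝ) : V :=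
  if 0 < ⨆ r, x r then hG.neighbor v (argmax x) else v

noncomputable def greedyWalk (i : V) : ℕ → (ℕ × V × V → ℝ) → V
  | 0, _ => i
  | k + 1, ω => hG.greedyStep (greedyWalk i k ω) (hG.edgeRow k (greedyWalk i k ω) ω)

noncomputable def greedyGain (i : V) (k : ℕ) (ω : ℕ × V × V → ℝ) : ℝ :=
  posSup (hG.edgeRow k (hG.greedyWalk i k ω) ω)

theorem greedyWalk_succ_eq_or_adj (i : V) (k : ℕ) (ω : ℕ × V × V → ℝ) :
    hG.greedyWalk i (k + 1) ω = hG.greedyWalk i k ω ∨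
      G.Adj (hG.greedyWalk i k ω) (hG.greedyWalk i (k + 1) ω) := by
  simp only [greedyWalk, greedyStep]
  split_ifs
  · exact .inr (hG.adj_neighbor _ _)
  · exact .inl rfl

theorem reachable_greedyWalk (i : V) (k : ℕ) (ω : ℕ × V × V → ℝ) :
    G.Reachable (hG.greedyWalk i k ω) i := by
  induction k with
  | zero => rfl
  | succ k ih =>
    rcases hG.greedyWalk_succ_eq_or_adj i k ω with h | h
    · rwa [h]
    · exact h.reachable.symm.trans ih

theorem stepWeight_greedyWalk [DecidableEq V] (i : V) (k : ℕ) (ω : ℕ × V × V → ℝ) :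
    stepWeight ω k (hG.greedyWalk i k ω) (hG.greedyWalk i (k + 1) ω) = hG.greedyGain i k ω := by
  simp only [greedyGain, posSup, greedyWalk, greedyStep, stepWeight]
  split_ifs with hpos hloop
  · exact absurd hloop (hG.adj_neighbor _ _).ne
  · rw [iSup_eq_apply_argmax] at hpos ⊢
    exact (max_eq_right hpos.le).symm
  · exact (max_eq_left (not_lt.mp hpos)).symm
  · exact absurd rfl ‹_›

theorem greedyGain_nonneg (i : V) (k : ℕ) (ω : ℕ × V × V → ℝ) : 0 ≤ hG.greedyGain i k ω :=
  le_max_left _ _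

theorem greedyGain_le_sliceAbsSum (i : V) (k : ℕ) (ω : ℕ × V × V → ℝ) :
    hG.greedyGain i k ω ≤ sliceAbsSum k ω := by
  classical
  exact hG.stepWeight_greedyWalk i k ω ▸
    (le_abs_self _).trans (abs_stepWeight_le_sliceAbsSum ω k _ _)

/-- Follow the greedy walk for `t - D` steps, then a geodesic back to `i`. -/
theorem sum_greedyGain_sub_le_pathMaxInf [DecidableEq V] {i : V} {D t : ℕ}
    (hD : ∀ u, G.dist u i ≤ D) (ht : D ≤ t) (ω : ℕ × V × V → ℝ) :
    ∑ k ∈ range (t - D), hG.greedyGain i k ω - ∑ k ∈ Ico (t - D) t, sliceAbsSum k ω ≤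
      pathMaxInf G t i i ω := by
  set n := t - D
  obtain ⟨w, hw⟩ := (hG.reachable_greedyWalk i n ω).exists_walk_length_eq_dist
  set p : ℕ → V := fun a => if a ≤ n then hG.greedyWalk i a ω else w.getVert (a - n) with hp
  have hp_early : ∀ a ≤ n, p a = hG.greedyWalk i a ω := fun a ha => if_pos ha
  have hp_late : ∀ a, n ≤ a → p a = w.getVert (a - n) := by
    intro a ha
    rcases ha.eq_or_lt with rfl | ha
    · simp [hp]
    · exact if_neg ha.not_ge
  have hstep : ∀ a, p (a + 1) = p a ∨ G.Adj (p a) (p (a + 1)) := by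
    intro a
    rcases lt_or_ge a n with ha | ha
    · rw [hp_early a ha.le, hp_early (a + 1) ha]
      exact hG.greedyWalk_succ_eq_or_adj i a ω
    · rw [hp_late a ha, hp_late (a + 1) (by omega), Nat.sub_add_comm ha]
      exact w.getVert_succ_eq_or_adj _
  have hpt : p t = i := by
    rw [hp_late t (Nat.sub_le t D), Nat.sub_sub_self ht]
    exact w.getVert_of_length_le (hw ▸ hD _)
  calc ∑ k ∈ range n, hG.greedyGain i k ω - ∑ k ∈ Ico n t, sliceAbsSum k ω
      ≤ ∑ k ∈ range n, stepWeight ω k (p k) (p (k + 1)) +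
          ∑ k ∈ Ico n t, stepWeight ω k (p k) (p (k + 1)) := by
        rw [sub_eq_add_neg, ← sum_neg_distrib]
        gcongr with k hk k
        · rw [hp_early k (mem_range.mp hk).le, hp_early (k + 1) (mem_range.mp hk),
            stepWeight_greedyWalk]
        · exact neg_le_of_abs_le (abs_stepWeight_le_sliceAbsSum ω k _ _)
    _ = ∑ k ∈ range t, stepWeight ω k (p k) (p (k + 1)) :=
        sum_range_add_sum_Ico _ (Nat.sub_le t D)
    _ ≤ pathMaxInf G t i i ω := le_pathMaxInf_of_steps G ω p (hp_early 0 n.zero_le) hpt hstep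

theorem measurable_greedyStep [MeasurableSpace V] [MeasurableSingletonClass V] (v : V) :
    Measurable (hG.greedyStep v) :=
  Measurable.ite (measurableSet_lt measurable_const (Measurable.iSup measurable_pi_apply))
    ((measurable_of_countable (hG.neighbor v)).comp measurable_argmax) measurable_const

theorem measurable_greedyWalk [MeasurableSpace V] [MeasurableSingletonClass V] (i : V) (k : ℕ) :
    Measurable[coordSigma {c : ℕ × V × V | c.1 < k}] (hG.greedyWalk i k) := by
  induction k with
  | zero => exact measurable_const
  | succ k ih =>
    exact measurable_select
      (ih.mono (coordSigma_mono fun c (hc : c.1 < k) => Nat.lt_succ_of_lt hc) le_rfl)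
      fun v => (hG.measurable_greedyStep v).comp
        (hG.measurable_edgeRow (fun c (hc : c.1 = k) => show c.1 < k + 1 by omega) v)

theorem measurable_greedyGain (i : V) (k : ℕ) :
    Measurable[coordSigma {c : ℕ × V × V | c.1 < k + 1}] (hG.greedyGain i k) := by
  let _ : MeasurableSpace V := ⊤
  exact measurable_select
    ((hG.measurable_greedyWalk i k).mono (coordSigma_mono fun c (hc : c.1 < k) =>
      Nat.lt_succ_of_lt hc) le_rfl)
    fun v => measurable_posSup.comp
      (hG.measurable_edgeRow (fun c (hc : c.1 = k) => show c.1 < k + 1 by omega) v)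

theorem measure_inter_greedyGain_preimage [IsProbabilityMeasure P]
    (hindep : iIndepFun (fun c (ω : ℕ × V × V → ℝ) => ω c) P)
    (hlaw : ∀ c, P.map (fun ω => ω c) = μ) (i : V) (k : ℕ) {A : Set (ℕ × V × V → ℝ)}
    (hA : MeasurableSet[coordSigma {c : ℕ × V × V | c.1 < k}] A) {s : Set ℝ}
    (hs : MeasurableSet s) :
    P (A ∩ hG.greedyGain i k ⁻¹' s) = P A * (Measure.pi fun _ : Fin d => μ).map posSup s := by
  let _ : MeasurableSpace V := ⊤
  refine measure_inter_preimage_select (coordSigma_le _) (coordSigma_le _)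
    (indep_coordSigma hindep (T := {c | c.1 = k})
      (Set.disjoint_left.mpr fun c (hlt : c.1 < k) (heq : c.1 = k) => hlt.ne heq))
    (hG.measurable_greedyWalk i k) (fun v => measurable_posSup.comp
      (hG.measurable_edgeRow (fun _ h => h) v)) (fun v => ?_) hA hs
  rw [← Measure.map_map measurable_posSup
    ((hG.measurable_edgeRow (fun _ h => h) v).mono (coordSigma_le _) le_rfl),
    hG.map_edgeRow hindep hlaw]

theorem map_greedyGain [IsProbabilityMeasure P]
    (hindep : iIndepFun (fun c (ω : ℕ × V × V → ℝ) => ω c) P)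
    (hlaw : ∀ c, P.map (fun ω => ω c) = μ) (i : V) (k : ℕ) :
    P.map (hG.greedyGain i k) = (Measure.pi fun _ : Fin d => μ).map posSup := by
  ext s hs
  rw [Measure.map_apply ((hG.measurable_greedyGain i k).mono (coordSigma_le _) le_rfl) hs]
  simpa using hG.measure_inter_greedyGain_preimage hindep hlaw i k MeasurableSet.univ hs

theorem pairwise_indepFun_greedyGain [IsProbabilityMeasure P]
    (hindep : iIndepFun (fun c (ω : ℕ × V × V → ℝ) => ω c) P)
    (hlaw : ∀ c, P.map (fun ω => ω c) = μ) (i : V) :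
    Pairwise fun j k => hG.greedyGain i j ⟂ᵢ[P] hG.greedyGain i k := by
  have hlt : ∀ j k, j < k → hG.greedyGain i j ⟂ᵢ[P] hG.greedyGain i k := by
    intro j k hjk
    rw [indepFun_iff_measure_inter_preimage_eq_mul]
    intro s t hs ht
    rw [hG.measure_inter_greedyGain_preimage hindep hlaw i k
      ((hG.measurable_greedyGain i j).mono (coordSigma_mono fun c (hc : c.1 < j + 1) =>
        show c.1 < k by omega) le_rfl hs) ht, ← hG.map_greedyGain hindep hlaw i k,
      Measure.map_apply ((hG.measurable_greedyGain i k).mono (coordSigma_le _) le_rfl) ht]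
  intro j k hjk
  rcases hjk.lt_or_gt with h | h
  · exact hlt j k h
  · exact (hlt k j h).symm

theorem identDistrib_greedyGain [IsProbabilityMeasure P]
    (hindep : iIndepFun (fun c (ω : ℕ × V × V → ℝ) => ω c) P)
    (hlaw : ∀ c, P.map (fun ω => ω c) = μ) (i : V) (k : ℕ) :
    IdentDistrib (hG.greedyGain i k) (hG.greedyGain i 0) P P :=
  ⟨((hG.measurable_greedyGain i k).mono (coordSigma_le _) le_rfl).aemeasurable,
    ((hG.measurable_greedyGain i 0).mono (coordSigma_le _) le_rfl).aemeasurable,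
    by rw [hG.map_greedyGain hindep hlaw, hG.map_greedyGain hindep hlaw]⟩

theorem integrable_greedyGain (hlaw : ∀ c, P.map (fun ω => ω c) = μ)
    (hint : Integrable id μ) (i : V) (k : ℕ) : Integrable (hG.greedyGain i k) P :=
  (integrable_sliceAbsSum hlaw hint k).mono'
    ((hG.measurable_greedyGain i k).mono (coordSigma_le _) le_rfl).aestronglyMeasurable
    (ae_of_all _ fun ω => by
      rw [Real.norm_eq_abs, abs_of_nonneg (hG.greedyGain_nonneg i k ω)]
      exact hG.greedyGain_le_sliceAbsSum i k ω)

theorem integral_greedyGain_zero [IsProbabilityMeasure P]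
    (hindep : iIndepFun (fun c (ω : ℕ × V × V → ℝ) => ω c) P)
    (hlaw : ∀ c, P.map (fun ω => ω c) = μ) (i : V) :
    ∫ ω, hG.greedyGain i 0 ω ∂P = mPlus μ d := by
  have hrow : Measurable (hG.edgeRow 0 i) :=
    (hG.measurable_edgeRow (S := {c | c.1 = 0}) (fun _ h => h) i).mono (coordSigma_le _) le_rfl
  calc ∫ ω, hG.greedyGain i 0 ω ∂P = ∫ y, posSup y ∂(P.map (hG.edgeRow 0 i)) :=
        (integral_map hrow.aemeasurable measurable_posSup.aestronglyMeasurable).symm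
    _ = mPlus μ d := by rw [hG.map_edgeRow hindep hlaw]; rfl

end SimpleGraph.IsRegularOfDegree

theorem liminf_pathMax_ge_regular_general {V : Type*} [Fintype V] [DecidableEq V]
    (G : SimpleGraph V) [DecidableRel G.Adj]
    (d : ℕ) (hd : 1 ≤ d) (hreg : ∀ v : V, G.degree v = d)
    (μ : Measure ℝ) (hint : Integrable id μ)
    (P : Measure (ℕ × V × V → ℝ)) [IsProbabilityMeasure P]
    (hindep : ProbabilityTheory.iIndepFun
      (fun c (ω : ℕ × V × V → ℝ) => ω c) P)
    (hlaw : ∀ c : ℕ × V × V, P.map (fun ω => ω c) = μ)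
    (i : V) :
    ∀ᵐ ω ∂P, mPlus μ d ≤
      Filter.liminf (fun t : ℕ => (⨆ j : V, pathMaxInf G t j i ω) / t) Filter.atTop := by
  have hG : G.IsRegularOfDegree d := hreg
  have : NeZero d := ⟨by omega⟩
  have hY := strong_law_ae_real (hG.greedyGain i) (hG.integrable_greedyGain hlaw hint i 0)
    (hG.pairwise_indepFun_greedyGain hindep hlaw i) (hG.identDistrib_greedyGain hindep hlaw i)
  have hW := strong_law_ae_real sliceAbsSum (integrable_sliceAbsSum hlaw hint 0)
    (pairwise_indepFun_sliceAbsSum hindep) (identDistrib_sliceAbsSum hindep hlaw)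
  rw [hG.integral_greedyGain_zero hindep hlaw] at hY
  obtain ⟨D, hD⟩ : ∃ D, ∀ u, G.dist u i ≤ D :=
    ⟨_, fun u => le_sup (f := fun u => G.dist u i) (mem_univ u)⟩
  filter_upwards [hY, hW] with ω hYω hWω
  refine le_liminf_div_of_sum_bounds D hYω hWω (fun t ht => ?_) fun t => ?_
  · exact (hG.sum_greedyGain_sub_le_pathMaxInf hD ht ω).trans
      (le_ciSup (f := fun j => pathMaxInf G t j i ω) (Set.finite_range _).bddAbove i)
  · exact Real.iSup_le (fun j => pathMaxInf_le_sum_sliceAbsSum G t j i ω)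
      (sum_nonneg fun k _ => sliceAbsSum_nonneg k ω)

/-- for a `d`-regular graph (`d ≥ 1`) and i.i.d. noise with law `μ` of
finite first moment, almost surely
`liminf_{t → ∞} (1/t) max_{j ∈ V} M_t^{(i,j)}(ω) ≥ m₊(d)`. -/
theorem liminf_pathMax_ge_regular {V : Type*} [Fintype V] [DecidableEq V]
    (G : SimpleGraph V) [DecidableRel G.Adj]
    (d : ℕ) (hd : 1 ≤ d) (hreg : ∀ v : V, G.degree v = d)
    (μ : Measure ℝ) [IsProbabilityMeasure μ] (hint : Integrable id μ)
    (P : Measure (ℕ × V × V → ℝ)) [IsProbabilityMeasure P]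
    (hindep : ProbabilityTheory.iIndepFun
      (fun c (ω : ℕ × V × V → ℝ) => ω c) P)
    (hlaw : ∀ c : ℕ × V × V, P.map (fun ω => ω c) = μ)
    (i : V) :
    ∀ᵐ ω ∂P, mPlus μ d ≤
      Filter.liminf (fun t : ℕ => (⨆ j : V, pathMaxInf G t j i ω) / t) Filter.atTop :=
  liminf_pathMax_ge_regular_general G d hd hreg μ hint P hindep hlaw i
end

section
/- Let μ be a probability measure on ℝ with moment generating function M, and let p ∈ [0,1). For C > 0 define M_C(γ) = p·e^{−Cγ} + (1−p)·M(γ). Then for every x ∈ ℝ, with all suprema taken in the extended reals [−∞,+∞]: sup_{C > 0} sup_{γ > 0} ( x·γ − log M_C(γ) ) = sup_{γ > 0} ( x·γ − log((1−p)·M(γ)) ). -/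
/-!
The extra term `p e^{-Cγ}` inside the logarithm is nonnegative, which gives `≤`.
Conversely, for fixed `γ > 0` that term tends to `0` as `C → ∞`; since `log : [0, ∞] → [-∞, ∞]`
is a homeomorphism and `y ↦ xγ - y` is continuous on `EReal`, the objective at `(C, γ)` tends
to `xγ - log((1-p) M(γ))`, which is therefore bounded by the double supremum.
-/

open MeasureTheory
open scoped ENNReal

/-- The (possibly infinite) moment generating function of `μ`,
`M(γ) = ∫ e^{γ y} dμ(y) ∈ (0, +∞]`. -/
noncomputable def mgfE (μ : Measure ℝ) (γ : ℝ) : ℝ≥0∞ :=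
  ∫⁻ y, ENNReal.ofReal (Real.exp (γ * y)) ∂μ

open Filter Topology

theorem EReal.Tendsto.coe_sub {α : Type*} {l : Filter α} {f : α → EReal} {y : EReal}
    (a : ℝ) (hf : Tendsto f l (𝓝 y)) : Tendsto (fun i => (a : EReal) - f i) l (𝓝 (a - y)) :=
  (EReal.continuousAt_add (p := ((a : EReal), -y)) (.inl (EReal.coe_ne_top a))
    (.inl (EReal.coe_ne_bot a))).tendsto.comp
    (tendsto_const_nhds.prodMk_nhds ((continuous_neg.tendsto y).comp hf))

theorem ENNReal.tendsto_ofReal_mul_exp_neg_mul_add (p : ℝ) {γ : ℝ} (hγ : 0 < γ) (q : ℝ≥0∞) :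
    Tendsto (fun C : ℝ => ENNReal.ofReal p * ENNReal.ofReal (Real.exp (-C * γ)) + q) atTop
      (𝓝 q) := by
  have hexp : Tendsto (fun C : ℝ => Real.exp (-C * γ)) atTop (𝓝 0) :=
    Real.tendsto_exp_atBot.comp (tendsto_neg_atTop_atBot.atBot_mul_const hγ)
  simpa only [ENNReal.ofReal_zero, mul_zero, zero_add] using
    (ENNReal.Tendsto.const_mul (ENNReal.tendsto_ofReal hexp)
      (.inr (ENNReal.ofReal_ne_top (r := p)))).add_const q

theorem sup_rate_deleted_edges_general (μ : Measure ℝ)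
    (p : ℝ) (x : ℝ) :
    (⨆ C : {c : ℝ // 0 < c}, ⨆ γ : {g : ℝ // 0 < g},
        ((x * γ : ℝ) : EReal) -
          ENNReal.log (ENNReal.ofReal p * ENNReal.ofReal (Real.exp (-(C : ℝ) * γ)) +
            ENNReal.ofReal (1 - p) * mgfE μ γ)) =
      ⨆ γ : {g : ℝ // 0 < g},
        ((x * γ : ℝ) : EReal) - ENNReal.log (ENNReal.ofReal (1 - p) * mgfE μ γ) := by
  refine le_antisymm (iSup₂_le fun C γ => le_iSup_of_le γ ?_) (iSup_le fun γ => ?_)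
  · exact EReal.sub_le_sub le_rfl (ENNReal.log_monotone le_add_self)
  · have hlim := EReal.Tendsto.coe_sub (x * γ) (ENNReal.continuous_log.continuousAt.tendsto.comp
      (ENNReal.tendsto_ofReal_mul_exp_neg_mul_add p γ.2 (ENNReal.ofReal (1 - p) * mgfE μ γ)))
    exact le_of_tendsto hlim <|
      (eventually_gt_atTop 0).mono fun C hC => le_iSup₂_of_le ⟨C, hC⟩ γ le_rfl

/-- with `M_C(γ) = p e^{−Cγ} + (1−p) M(γ)`, for every real `x`,
`sup_{C > 0} sup_{γ > 0} (xγ − log M_C(γ)) = sup_{γ > 0} (xγ − log((1−p) M(γ)))`,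
all suprema and the expressions being taken in the extended reals `[−∞, +∞]`. -/
theorem sup_rate_deleted_edges (μ : Measure ℝ) [IsProbabilityMeasure μ]
    (p : ℝ) (hp : p ∈ Set.Ico (0 : ℝ) 1) (x : ℝ) :
    (⨆ C : {c : ℝ // 0 < c}, ⨆ γ : {g : ℝ // 0 < g},
        ((x * γ : ℝ) : EReal) -
          ENNReal.log (ENNReal.ofReal p * ENNReal.ofReal (Real.exp (-(C : ℝ) * γ)) +
            ENNReal.ofReal (1 - p) * mgfE μ γ)) =
      ⨆ γ : {g : ℝ // 0 < g},
        ((x * γ : ℝ) : EReal) - ENNReal.log (ENNReal.ofReal (1 - p) * mgfE μ γ) :=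
  sup_rate_deleted_edges_general μ p x
end

section
/- Let μ be a probability measure on ℝ whose moment generating function M(γ) is finite for every γ > 0, let K > 0 and x > 0. Then, with values in the extended reals [−∞,+∞], sup_{β ∈ [0,1]} inf_{γ > 0} [ H(β) + β·log K + β·log M(γ) − x·γ ] = inf_{γ > 0} [ log(1 + K·M(γ)) − x·γ ]. (Note that for β ∈ (0,1] the inner infimum equals H(β) + β·log K − β·I(x/β), where I is the large deviation rate function of μ.) -/
open MeasureTheory

/-!
Write `Ψ γ = log K + log M(γ)`, which is convex (Hölder's inequality), and
`softplus t = log (1 + exp t)`. Gibbs' inequality `H(β) + β t ≤ softplus t` for `β ∈ [0, 1]`,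
with equality at `β = sigmoid t`, says that `softplus` is the convex conjugate of `-H`; it bounds
the inner expression by `G γ = softplus (Ψ γ) - x γ`, which gives `≤`. Conversely, the convex
function `G` on `[0, ∞)` either attains its minimum at some `γ₀`, and then first-order optimality
of `γ₀` keeps the inner expression at `β = sigmoid (Ψ γ₀)` above `G γ₀`; or it decreases
to its infimum `L`, and then `Ψ → ∞`, so the convex function `Ψ γ - x γ = G γ - softplus (-Ψ γ)`
also tends to `L`, lies above `L`, and `β = 1` works.
-/

open Real Set Filter Topology ProbabilityTheory

noncomputable def softplus (t : ℝ) : ℝ := log (1 + exp t)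

lemma softplus_monotone : Monotone softplus := fun _ _ hab =>
  log_le_log (by positivity) (by gcongr)

lemma continuous_softplus : Continuous softplus :=
  (continuous_const.add continuous_exp).log fun t => (by positivity : (0 : ℝ) < 1 + exp t).ne'

lemma softplus_neg (t : ℝ) : softplus (-t) = softplus t - t := by
  have h : 1 + exp t = (1 + exp (-t)) * exp t := by
    rw [add_mul, ← exp_add, neg_add_cancel, exp_zero, one_mul, add_comm]
  rw [softplus, softplus, h, log_mul (by positivity) (by positivity), log_exp, add_sub_cancel_right]

lemma softplus_le_exp (t : ℝ) : softplus t ≤ exp t := by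
  have := log_le_sub_one_of_pos (by positivity : 0 < 1 + exp t)
  rw [softplus]
  linarith

lemma tendsto_softplus_atBot : Tendsto softplus atBot (𝓝 0) := by
  unfold softplus
  have h : Tendsto (fun t => 1 + exp t) atBot (𝓝 1) := by
    simpa using tendsto_exp_atBot.const_add 1
  simpa [Function.comp_def] using (continuousAt_log one_ne_zero).tendsto.comp h

lemma hasDerivAt_softplus (t : ℝ) : HasDerivAt softplus (sigmoid t) t := by
  have h : sigmoid t = exp t / (1 + exp t) := by
    rw [sigmoid_def, exp_neg]; field_simp; ring
  rw [h]
  exact ((hasDerivAt_exp t).const_add 1).log (by positivity)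

lemma convexOn_softplus : ConvexOn ℝ univ softplus := by
  have hderiv : deriv softplus = sigmoid := funext fun t => (hasDerivAt_softplus t).deriv
  exact (hderiv ▸ sigmoid_monotone).convexOn_univ_of_deriv
    fun t => (hasDerivAt_softplus t).differentiableAt

lemma log_sigmoid (t : ℝ) : log (sigmoid t) = -softplus (-t) := by
  rw [sigmoid_def, log_inv, softplus]

lemma binH_eq_negMulLog (β : ℝ) : binH β = negMulLog β + negMulLog (1 - β) := by
  simp only [binH, negMulLog]; ring

lemma negMulLog_add_mul_log_le {p q : ℝ} (hp : 0 ≤ p) (hq : 0 < q) :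
    negMulLog p + p * log q ≤ q - p := by
  rcases hp.eq_or_lt with rfl | hp
  · simpa using hq.le
  have h := log_le_sub_one_of_pos (div_pos hq hp)
  rw [log_div hq.ne' hp.ne'] at h
  have h' := mul_le_mul_of_nonneg_left h hp.le
  rw [mul_sub p (q / p), mul_div_cancel₀ q hp.ne'] at h'
  rw [negMulLog]
  linarith

lemma binH_add_mul_le_softplus {β : ℝ} (hβ : β ∈ Icc (0 : ℝ) 1) (t : ℝ) :
    binH β + β * t ≤ softplus t := by
  have h₁ := negMulLog_add_mul_log_le hβ.1 (sigmoid_pos t)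
  have h₂ := negMulLog_add_mul_log_le (sub_nonneg.2 hβ.2) (sigmoid_pos (-t))
  rw [log_sigmoid, softplus_neg] at h₁
  rw [log_sigmoid, neg_neg, sigmoid_neg] at h₂
  rw [binH_eq_negMulLog]
  linarith

lemma binH_sigmoid_add_mul (t : ℝ) : binH (sigmoid t) + sigmoid t * t = softplus t := by
  rw [binH, ← sigmoid_neg, log_sigmoid, log_sigmoid, neg_neg, softplus_neg, sigmoid_neg]
  ring

theorem ConvexOn.comp_of_monotone {E : Type*} [AddCommGroup E] [Module ℝ E] {s : Set E}
    {f : E → ℝ} {g : ℝ → ℝ} (hg : ConvexOn ℝ univ g) (hgm : Monotone g) (hf : ConvexOn ℝ s f) :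
    ConvexOn ℝ s (g ∘ f) :=
  ⟨hf.1, fun _ hx _ hy _ _ ha hb hab =>
    (hgm (hf.2 hx hy ha hb hab)).trans (hg.2 trivial trivial ha hb hab)⟩

theorem ConvexOn.exists_isMinOn_or_antitoneOn {f : ℝ → ℝ} {a : ℝ} (hf : ConvexOn ℝ (Ici a) f)
    (hfc : ContinuousOn f (Ici a)) :
    (∃ y ∈ Ici a, IsMinOn f (Ici a) y) ∨ AntitoneOn f (Ici a) := by
  refine or_iff_not_imp_right.2 fun hanti => ?_
  simp only [AntitoneOn, not_forall, not_le] at hanti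
  obtain ⟨u, hu, v, hv, huv, hlt⟩ := hanti
  have huv' : u < v := huv.lt_of_ne (by rintro rfl; exact hlt.false)
  obtain ⟨y, hy, hmin⟩ :=
    isCompact_Icc.exists_isMinOn (nonempty_Icc.2 hv) (hfc.mono Icc_subset_Ici_self)
  refine ⟨y, hy.1, fun w hw => ?_⟩
  rcases le_total w v with hwv | hvw
  · exact hmin ⟨hw, hwv⟩
  · exact (hmin ⟨hv, le_rfl⟩).trans (hf.le_right_of_left_le'' hu hw huv' hvw hlt.le)

theorem AntitoneOn.exists_tendsto_atTop {f : ℝ → ℝ} {a m : ℝ} (hf : AntitoneOn f (Ici a))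
    (hm : ∀ y ∈ Ici a, m ≤ f y) : ∃ L, Tendsto f atTop (𝓝 L) ∧ m ≤ L := by
  set g := fun y => f (max y a)
  have hg : Antitone g := fun u v huv =>
    hf (le_max_right u a) (le_max_right v a) (max_le_max_right a huv)
  have hgm : ∀ y, m ≤ g y := fun y => hm _ (le_max_right y a)
  refine ⟨⨅ y, g y, (tendsto_atTop_ciInf hg ⟨m, forall_mem_range.2 hgm⟩).congr' ?_, le_ciInf hgm⟩
  filter_upwards [eventually_ge_atTop a] with y hy
  simp [g, max_eq_left hy]

theorem ConvexOn.le_of_tendsto_atTop {f : ℝ → ℝ} {a L : ℝ} (hf : ConvexOn ℝ (Ici a) f)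
    (hL : Tendsto f atTop (𝓝 L)) {y : ℝ} (hy : y ∈ Ici a) : L ≤ f y := by
  have hslope : Tendsto (fun w => (f w - f y) / (w - y)) atTop (𝓝 0) :=
    (hL.sub_const _).div_atTop (tendsto_atTop_add_const_right _ (-y) tendsto_id)
  refine le_of_tendsto hL ((eventually_gt_atTop y).mono fun z hyz => ?_)
  have hz : z ∈ Ici a := le_trans hy hyz.le
  have hle : (f z - f y) / (z - y) ≤ 0 := ge_of_tendsto hslope <|
    (eventually_ge_atTop z).mono fun w hzw =>
      hf.secant_mono hy hz (le_trans hz hzw) hyz.ne' (hyz.trans_le hzw).ne' hzw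
  have := (div_le_iff₀ (sub_pos.2 hyz)).1 hle
  linarith

theorem HasDerivAt.le_mul_of_forall_mul_le_sub {f : ℝ → ℝ} {f' t a c : ℝ}
    (hf : HasDerivAt f f' t) (h : ∀ s ∈ Ioc (0 : ℝ) 1, s * c ≤ f (t + s * a) - f t) :
    c ≤ f' * a := by
  have hd : HasDerivAt (fun s => f (t + s * a)) (f' * a) 0 := by
    have := ((hasDerivAt_id (0 : ℝ)).mul_const a).const_add t
    simpa [Function.comp_def] using (by simpa using hf : HasDerivAt f f' (t + 0 * a)).comp 0 this
  have hslope : Tendsto (slope (fun s => f (t + s * a)) 0) (𝓝[>] 0) (𝓝 (f' * a)) :=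
    (hasDerivAt_iff_tendsto_slope.1 hd).mono_left
      (nhdsWithin_mono _ fun s (hs : (0 : ℝ) < s) => hs.ne')
  refine ge_of_tendsto hslope ?_
  filter_upwards [Ioc_mem_nhdsGT zero_lt_one] with s hs
  rw [slope_def_field, sub_zero, zero_mul, add_zero, le_div_iff₀ hs.1]
  linarith [h s hs]

namespace ProbabilityTheory

variable {Ω : Type*} [MeasurableSpace Ω] {X : Ω → ℝ} {μ : Measure Ω}

lemma convexOn_cgf [NeZero μ] : ConvexOn ℝ (integrableExpSet X μ) (cgf X μ) := by
  refine ⟨convex_integrableExpSet, fun t₁ h₁ t₂ h₂ a b ha hb hab => ?_⟩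
  have hM₁ := mgf_pos' (NeZero.ne μ) h₁
  have hM₂ := mgf_pos' (NeZero.ne μ) h₂
  have hint := convex_integrableExpSet h₁ h₂ ha hb hab
  simp only [smul_eq_mul] at hint ⊢
  set c := a * cgf X μ t₁ + b * cgf X μ t₂
  -- Convexity of `exp`, normalised so that both terms on the right integrate to `1`.
  have hpt : ∀ ω, exp ((a * t₁ + b * t₂) * X ω) ≤
      exp c * (a / mgf X μ t₁ * exp (t₁ * X ω) + b / mgf X μ t₂ * exp (t₂ * X ω)) := fun ω =>
    calc exp ((a * t₁ + b * t₂) * X ω)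
        = exp c * exp (a * (t₁ * X ω - cgf X μ t₁) + b * (t₂ * X ω - cgf X μ t₂)) := by
          rw [← exp_add]; congr 1; ring
      _ ≤ exp c * (a * exp (t₁ * X ω - cgf X μ t₁) + b * exp (t₂ * X ω - cgf X μ t₂)) := by
          gcongr
          exact convexOn_exp.2 (mem_univ _) (mem_univ _) ha hb hab
      _ = exp c * (a / mgf X μ t₁ * exp (t₁ * X ω) + b / mgf X μ t₂ * exp (t₂ * X ω)) := by
          rw [exp_sub, exp_sub, cgf, cgf, exp_log hM₁, exp_log hM₂]; ring
  have hmgf : mgf X μ (a * t₁ + b * t₂) ≤ exp c :=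
    calc mgf X μ (a * t₁ + b * t₂)
        ≤ ∫ ω, exp c * (a / mgf X μ t₁ * exp (t₁ * X ω) + b / mgf X μ t₂ * exp (t₂ * X ω)) ∂μ :=
          integral_mono hint (((h₁.const_mul _).add (h₂.const_mul _)).const_mul _) hpt
      _ = exp c := by
          rw [integral_const_mul, integral_add (h₁.const_mul _) (h₂.const_mul _),
            integral_const_mul, integral_const_mul, ← mgf, ← mgf,
            div_mul_cancel₀ a hM₁.ne', div_mul_cancel₀ b hM₂.ne', hab, mul_one]
  exact (log_le_iff_le_exp (mgf_pos' (NeZero.ne μ) hint)).2 hmgf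

lemma continuousOn_mgf_Ici {a : ℝ} (h : Ici a ⊆ integrableExpSet X μ) :
    ContinuousOn (mgf X μ) (Ici a) := by
  intro z hz
  have hnear : ∀ᶠ t in 𝓝[Ici a] z, t ∈ Icc a (z + 1) :=
    inter_mem self_mem_nhdsWithin (mem_nhdsWithin_of_mem_nhds (Iic_mem_nhds (by linarith)))
  refine continuousWithinAt_of_dominated (bound := fun ω => exp (a * X ω) + exp ((z + 1) * X ω))
    (hnear.mono fun t ht => (h ht.1).aestronglyMeasurable)
    (hnear.mono fun t ht => ae_of_all _ fun ω => ?_)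
    ((h self_mem_Ici).add (h (show a ≤ z + 1 by linarith [mem_Ici.1 hz])))
    (ae_of_all _ fun ω =>
      (continuous_exp.comp (continuous_id.mul continuous_const)).continuousWithinAt)
  rw [norm_of_nonneg (exp_pos _).le]
  rcases le_total 0 (X ω) with hX | hX
  · exact (exp_le_exp.2 (mul_le_mul_of_nonneg_right ht.2 hX)).trans
      (le_add_of_nonneg_left (exp_pos _).le)
  · exact (exp_le_exp.2 (mul_le_mul_of_nonpos_right ht.1 hX)).trans
      (le_add_of_nonneg_right (exp_pos _).le)

end ProbabilityTheory

theorem le_binH_sigmoid_add_mul_of_isMinOn {s : Set ℝ} {Ψ : ℝ → ℝ} {x γ₀ γ : ℝ}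
    (hΨ : ConvexOn ℝ s Ψ) (hγ₀ : γ₀ ∈ s) (hmin : IsMinOn (fun γ => softplus (Ψ γ) - x * γ) s γ₀)
    (hγ : γ ∈ s) :
    softplus (Ψ γ₀) - x * γ₀ ≤ binH (sigmoid (Ψ γ₀)) + sigmoid (Ψ γ₀) * Ψ γ - x * γ := by
  set t := Ψ γ₀
  -- First-order optimality of `γ₀` along the segment towards `γ`.
  have hslope : x * (γ - γ₀) ≤ sigmoid t * (Ψ γ - t) := by
    refine (hasDerivAt_softplus t).le_mul_of_forall_mul_le_sub fun r hr => ?_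
    have hr' : 0 ≤ 1 - r := by linarith [hr.2]
    have hmem : (1 - r) • γ₀ + r • γ ∈ s := hΨ.1 hγ₀ hγ hr' hr.1.le (by ring)
    have hconv : Ψ ((1 - r) • γ₀ + r • γ) ≤ t + r * (Ψ γ - t) :=
      (hΨ.2 hγ₀ hγ hr' hr.1.le (by ring)).trans_eq (by simp only [smul_eq_mul, t]; ring)
    have hle : softplus t - x * γ₀ ≤
        softplus (Ψ ((1 - r) • γ₀ + r • γ)) - x * ((1 - r) • γ₀ + r • γ) := hmin hmem
    have hmono := softplus_monotone hconv
    simp only [smul_eq_mul] at hle hmono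
    linarith
  linarith [binH_sigmoid_add_mul t]

theorem le_sub_mul_of_antitoneOn {Ψ : ℝ → ℝ} {a x m : ℝ} (hΨ : ConvexOn ℝ (Ici a) Ψ)
    (hx : 0 < x) (hanti : AntitoneOn (fun γ => softplus (Ψ γ) - x * γ) (Ici a))
    (hm : ∀ γ ∈ Ici a, m ≤ softplus (Ψ γ) - x * γ) {γ : ℝ} (hγ : γ ∈ Ici a) :
    m ≤ Ψ γ - x * γ := by
  obtain ⟨L, hL, hmL⟩ := hanti.exists_tendsto_atTop hm
  have hΨ_top : Tendsto Ψ atTop atTop := by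
    have hlin : Tendsto (fun γ => m + x * γ) atTop atTop :=
      tendsto_atTop_add_const_left _ _ (tendsto_id.const_mul_atTop hx)
    have hexp : Tendsto (fun γ => exp (Ψ γ)) atTop atTop :=
      tendsto_atTop_mono' _ ((eventually_ge_atTop a).mono fun γ hγ => by
        linarith [hm γ hγ, softplus_le_exp (Ψ γ)]) hlin
    simpa [Function.comp_def] using tendsto_log_atTop.comp hexp
  have hlim : Tendsto (fun γ => Ψ γ - x * γ) atTop (𝓝 L) := by
    have := hL.sub (tendsto_softplus_atBot.comp (tendsto_neg_atTop_atBot.comp hΨ_top))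
    rw [sub_zero] at this
    refine this.congr fun γ => ?_
    simp only [Function.comp_apply, softplus_neg]
    ring
  have hconv : ConvexOn ℝ (Ici a) (fun γ => Ψ γ - x * γ) :=
    hΨ.sub ((concaveOn_id (convex_Ici a)).smul hx.le)
  exact hmL.trans (hconv.le_of_tendsto_atTop hlim hγ)

theorem exists_forall_le_binH_add_mul {Ψ : ℝ → ℝ} {x m : ℝ} (hΨ : ConvexOn ℝ (Ici 0) Ψ)
    (hΨc : ContinuousOn Ψ (Ici 0)) (hx : 0 < x) (hm : ∀ γ > 0, m ≤ softplus (Ψ γ) - x * γ) :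
    ∃ β ∈ Icc (0 : ℝ) 1, ∀ γ ∈ Ici (0 : ℝ), m ≤ binH β + β * Ψ γ - x * γ := by
  set G := fun γ => softplus (Ψ γ) - x * γ
  have hGc : ContinuousOn G (Ici 0) :=
    (continuous_softplus.comp_continuousOn hΨc).sub (continuousOn_const.mul continuousOn_id)
  have hG : ConvexOn ℝ (Ici 0) G :=
    (convexOn_softplus.comp_of_monotone softplus_monotone hΨ).sub
      ((concaveOn_id (convex_Ici 0)).smul hx.le)
  have hm' : ∀ γ ∈ Ici 0, m ≤ G γ := fun γ hγ =>
    ContinuousWithinAt.closure_le (by rwa [closure_Ioi]) continuousWithinAt_const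
      ((hGc γ hγ).mono Ioi_subset_Ici_self) hm
  rcases hG.exists_isMinOn_or_antitoneOn hGc with ⟨γ₀, hγ₀, hmin⟩ | hanti
  · exact ⟨sigmoid (Ψ γ₀), ⟨(sigmoid_pos _).le, (sigmoid_lt_one _).le⟩, fun γ hγ =>
      (hm' γ₀ hγ₀).trans (le_binH_sigmoid_add_mul_of_isMinOn hΨ hγ₀ hmin hγ)⟩
  · refine ⟨1, right_mem_Icc.2 zero_le_one, fun γ hγ => ?_⟩
    simpa [binH] using le_sub_mul_of_antitoneOn hΨ hx hanti hm' hγ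

theorem EReal.iInf_coe_le_of_forall {ι : Sort*} [Nonempty ι] {g : ι → ℝ} {w : EReal}
    (h : ∀ m : ℝ, (∀ i, m ≤ g i) → (m : EReal) ≤ w) : ⨅ i, (g i : EReal) ≤ w := by
  induction hz : ⨅ i, (g i : EReal) using EReal.rec with
  | bot => exact bot_le
  | coe m => exact h m fun i => EReal.coe_le_coe_iff.1 (hz ▸ iInf_le _ i)
  | top => exact absurd (hz ▸ iInf_le _ (Classical.arbitrary ι)) (by simp)

theorem iSup_iInf_binH_add_mul_eq_iInf_softplus {Ψ : ℝ → ℝ} {x : ℝ}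
    (hΨ : ConvexOn ℝ (Ici 0) Ψ) (hΨc : ContinuousOn Ψ (Ici 0)) (hx : 0 < x) :
    (⨆ β : Icc (0 : ℝ) 1, ⨅ γ : {g : ℝ // 0 < g}, ((binH β + β * Ψ γ - x * γ : ℝ) : EReal)) =
      ⨅ γ : {g : ℝ // 0 < g}, ((softplus (Ψ γ) - x * γ : ℝ) : EReal) := by
  have : Nonempty {g : ℝ // 0 < g} := ⟨⟨1, one_pos⟩⟩
  refine le_antisymm (iSup_le fun β => le_iInf fun γ => iInf_le_of_le γ ?_) ?_
  · exact EReal.coe_le_coe_iff.2 (by linarith [binH_add_mul_le_softplus β.2 (Ψ γ)])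
  refine EReal.iInf_coe_le_of_forall fun m hm => ?_
  obtain ⟨β, hβ, hle⟩ := exists_forall_le_binH_add_mul hΨ hΨc hx fun γ hγ => hm ⟨γ, hγ⟩
  exact le_iSup_of_le ⟨β, hβ⟩ (le_iInf fun γ => EReal.coe_le_coe_iff.2 (hle γ γ.2.le))

/-- minimax identity; with `M(γ) = ∫ e^{γ y} dμ(y)` finite for `γ > 0`,
`sup_{β ∈ [0,1]} inf_{γ > 0} [H(β) + β log K + β log M(γ) − xγ]
  = inf_{γ > 0} [log(1 + K M(γ)) − xγ]`,
values taken in the extended reals `[−∞, +∞]`. (For `β ∈ (0,1]` the inner infimum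
equals `H(β) + β log K − β I(x/β)` where `I` is the rate function of `μ`.) -/
theorem sup_inf_eq_inf_log (μ : Measure ℝ) [IsProbabilityMeasure μ]
    (hmgf : ∀ γ : ℝ, 0 < γ → Integrable (fun y => Real.exp (γ * y)) μ)
    (K x : ℝ) (hK : 0 < K) (hx : 0 < x) :
    (⨆ β : Set.Icc (0 : ℝ) 1, ⨅ γ : {g : ℝ // 0 < g},
        ((binH β + (β : ℝ) * Real.log K +
          (β : ℝ) * Real.log (∫ y, Real.exp ((γ : ℝ) * y) ∂μ) - x * γ : ℝ) : EReal)) =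
      ⨅ γ : {g : ℝ // 0 < g},
        ((Real.log (1 + K * ∫ y, Real.exp ((γ : ℝ) * y) ∂μ) - x * γ : ℝ) : EReal) := by
  have hint : Ici 0 ⊆ integrableExpSet id μ := fun γ hγ =>
    (mem_Ici.1 hγ).eq_or_lt.elim (fun h => by simp [integrableExpSet, ← h]) (hmgf γ)
  have hΨ : ConvexOn ℝ (Ici 0) (fun γ => log K + cgf id μ γ) :=
    (convexOn_const _ (convex_Ici 0)).add (convexOn_cgf.subset hint (convex_Ici 0))
  have hΨc : ContinuousOn (fun γ => log K + cgf id μ γ) (Ici 0) :=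
    continuousOn_const.add ((continuousOn_mgf_Ici hint).log fun γ hγ => (mgf_pos (hint hγ)).ne')
  refine (iSup_congr fun β => iInf_congr fun γ => ?_).trans
    ((iSup_iInf_binH_add_mul_eq_iInf_softplus hΨ hΨc hx).trans (iInf_congr fun γ => ?_))
  · congr 1
    simp only [cgf, mgf, id]
    ring
  · rw [softplus, exp_add, exp_log hK, cgf, exp_log (mgf_pos (hint γ.2.le))]; rfl
end

section
/- (Efron–Stein inequality.) Let n ≥ 1, let μ₁,…,μ_n be probability measures on ℝ, let μ = μ₁ ⊗ … ⊗ μ_n be their product on ℝ^n, and let f : ℝ^n → ℝ be measurable and square-integrable with respect to μ. On the product space ℝ^n × ℝ^n with measure μ ⊗ μ, write ω = (X, X′), Z(ω) = f(X), and for each q ∈ {1,…,n} let Z_q′(ω) = f(X with its q-th coordinate replaced by X′_q). Then Var(Z) ≤ ∑_{q=1}^{n} E[ (max(0, Z − Z_q′))² ], where Var and E are taken with respect to μ ⊗ μ. -/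
/-!
Let `Y_k` be the hybrid of `X` and `X'` taking its first `k` coordinates from `X` and the others
from `X'`, and `Δ_q = f(Y_{q+1}) - f(Y_q)`, so that `f(X) - f(X') = ∑_q Δ_q` and
`Var f(X) = E[f(X) (f(X) - f(X'))] = ∑_q E[f(X) Δ_q]`. Exchanging the `q`-th coordinates of `X`
and `X'` preserves the law of `(X, X')` and changes the sign of `Δ_q`, hence
`E[f(X) Δ_q] = ½ E[D_q Δ_q]` with `D_q = f(X) - f(X^{(q)})`. Exchanging all coordinates from the
`q`-th on maps `D_q` to `-Δ_q`, so `E[D_q Δ_q] ≤ (E[D_q²] + E[Δ_q²]) / 2 = E[D_q²]`, and `D_q` is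
antisymmetric under the `q`-th exchange, so `E[D_q²] = 2 E[(D_q)₊²]`.
-/

open MeasureTheory ProbabilityTheory

section MeanSquare

variable {α : Type*} [MeasurableSpace α] {ν : Measure α}

lemma two_mul_integral_mul_le_add_integral_sq {u v : α → ℝ} (hu : MemLp u 2 ν)
    (hv : MemLp v 2 ν) :
    2 * ∫ x, u x * v x ∂ν ≤ ∫ x, u x ^ 2 ∂ν + ∫ x, v x ^ 2 ∂ν := by
  rw [← integral_const_mul, ← integral_add hu.integrable_sq hv.integrable_sq]
  refine integral_mono ((hu.integrable_mul hv).const_mul 2)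
    (hu.integrable_sq.add hv.integrable_sq) fun x => ?_
  simpa only [mul_assoc] using two_mul_le_add_sq (u x) (v x)

variable {e : α ≃ᵐ α}

lemma two_mul_integral_mul_eq_of_comp_eq_neg (he : MeasurePreserving e ν ν) {F g : α → ℝ}
    (hF : MemLp F 2 ν) (hg : MemLp g 2 ν) (hge : ∀ x, g (e x) = -g x) :
    2 * ∫ x, F x * g x ∂ν = ∫ x, (F x - F (e x)) * g x ∂ν := by
  have hflip : ∫ x, F x * g x ∂ν = -∫ x, F (e x) * g x ∂ν := by
    rw [← he.integral_comp', ← integral_neg]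
    simp_rw [hge, mul_neg]
  simp_rw [sub_mul]
  rw [integral_sub (f := fun x => F x * g x) (g := fun x => F (e x) * g x) (hF.integrable_mul hg)
    ((hF.comp_measurePreserving he).integrable_mul hg)]
  linarith

lemma integral_sq_eq_two_mul_integral_max_zero_sq (he : MeasurePreserving e ν ν) {g : α → ℝ}
    (hg : MemLp g 2 ν) (hge : ∀ x, g (e x) = -g x) :
    ∫ x, g x ^ 2 ∂ν = 2 * ∫ x, max 0 (g x) ^ 2 ∂ν := by
  have hpos : MemLp (fun x => max 0 (g x)) 2 ν := by simpa only [max_comm] using hg.pos_part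
  have hneg : MemLp (fun x => max 0 (-g x)) 2 ν := by simpa only [max_comm] using hg.neg_part
  have hflip : ∫ x, max 0 (-g x) ^ 2 ∂ν = ∫ x, max 0 (g x) ^ 2 ∂ν := by
    rw [← he.integral_comp']
    simp_rw [hge, neg_neg]
  calc ∫ x, g x ^ 2 ∂ν = ∫ x, (max 0 (g x) ^ 2 + max 0 (-g x) ^ 2) ∂ν := by
        congr with x
        rcases le_total 0 (g x) with h | h
        · simp [h]
        · simp [h]
    _ = 2 * ∫ x, max 0 (g x) ^ 2 ∂ν := by
        rw [integral_add hpos.integrable_sq hneg.integrable_sq, hflip, two_mul]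

lemma variance_comp_fst_eq_integral_mul_sub [IsProbabilityMeasure ν] {f : α → ℝ}
    (hf : MemLp f 2 ν) :
    Var[fun ω : α × α => f ω.1; ν.prod ν] = ∫ ω, f ω.1 * (f ω.1 - f ω.2) ∂(ν.prod ν) := by
  have h₁ := hf.comp_fst ν
  simp_rw [mul_sub]
  rw [variance_eq_sub h₁,
    integral_sub (f := fun ω : α × α => f ω.1 * f ω.1) (g := fun ω : α × α => f ω.1 * f ω.2)
      (h₁.integrable_mul h₁) (h₁.integrable_mul (hf.comp_snd ν)),
    integral_prod_mul, integral_fun_fst]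
  simp [sq]

end MeanSquare

section SwapOn

variable {ι E : Type*} [MeasurableSpace E]

open scoped Classical in
noncomputable def swapOn (s : Set ι) : ((ι → E) × (ι → E)) ≃ᵐ ((ι → E) × (ι → E)) :=
  (MeasurableEquiv.arrowProdEquivProdArrow E E ι).symm.trans <|
    (MeasurableEquiv.piCongrRight fun i =>
      if i ∈ s then MeasurableEquiv.prodComm else MeasurableEquiv.refl (E × E)).trans
    (MeasurableEquiv.arrowProdEquivProdArrow E E ι)

open scoped Classical in
lemma swapOn_apply (s : Set ι) (ω : (ι → E) × (ι → E)) :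
    swapOn s ω = (s.piecewise ω.2 ω.1, s.piecewise ω.1 ω.2) := by
  ext i <;> by_cases hi : i ∈ s <;>
    simp [swapOn, hi, MeasurableEquiv.arrowProdEquivProdArrow, Equiv.arrowProdEquivProdArrow,
      MeasurableEquiv.piCongrRight] <;> rfl

lemma swapOn_swapOn (s t : Set ι) (ω : (ι → E) × (ι → E)) :
    swapOn s (swapOn t ω) = swapOn (symmDiff s t) ω := by
  ext i <;> by_cases hs : i ∈ s <;> by_cases ht : i ∈ t <;>
    simp [swapOn_apply, Set.piecewise, Set.mem_symmDiff, hs, ht]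

@[simp]
lemma swapOn_empty (ω : (ι → E) × (ι → E)) : swapOn ∅ ω = ω := by
  simp [swapOn_apply]

@[simp]
lemma swapOn_univ (ω : (ι → E) × (ι → E)) : swapOn Set.univ ω = ω.swap := by
  simp [swapOn_apply, Prod.swap]

lemma fst_swapOn_singleton [DecidableEq ι] (q : ι) (ω : (ι → E) × (ι → E)) :
    (swapOn {q} ω).1 = Function.update ω.1 q (ω.2 q) := by
  ext i
  by_cases hi : i = q
  · subst hi; simp [swapOn_apply]
  · simp [swapOn_apply, hi]

lemma measurePreserving_swapOn [Fintype ι] (μ : ι → Measure E) [∀ i, SigmaFinite (μ i)]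
    (s : Set ι) :
    MeasurePreserving (swapOn s) ((Measure.pi μ).prod (Measure.pi μ))
      ((Measure.pi μ).prod (Measure.pi μ)) := by
  classical
  have hA := measurePreserving_arrowProdEquivProdArrow E E ι μ μ
  refine hA.comp ((measurePreserving_pi _ _ fun i => ?_).comp (hA.symm _))
  dsimp only
  split_ifs
  · exact Measure.measurePreserving_swap
  · exact MeasurePreserving.id _

end SwapOn

section Hybrid

variable {n : ℕ} {E : Type*} [MeasurableSpace E]

/-- The first `k` coordinates of `ω.1` followed by the remaining coordinates of `ω.2`. -/
noncomputable def hybrid (k : ℕ) (ω : (Fin n → E) × (Fin n → E)) : Fin n → E :=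
  (swapOn {i : Fin n | k ≤ (i : ℕ)} ω).1

@[simp]
lemma hybrid_zero (ω : (Fin n → E) × (Fin n → E)) : hybrid 0 ω = ω.2 := by
  simp [hybrid]

@[simp]
lemma hybrid_self (ω : (Fin n → E) × (Fin n → E)) : hybrid n ω = ω.1 := by
  have : {i : Fin n | n ≤ (i : ℕ)} = ∅ := by ext i; simp [i.is_lt]
  simp [hybrid, this]

lemma sub_eq_sum_hybrid {F : Type*} [AddCommGroup F] (f : (Fin n → E) → F)
    (ω : (Fin n → E) × (Fin n → E)) :
    f ω.1 - f ω.2 = ∑ q : Fin n, (f (hybrid (q + 1) ω) - f (hybrid q ω)) := by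
  rw [Fin.sum_univ_eq_sum_range (fun k => f (hybrid (k + 1) ω) - f (hybrid k ω)),
    Finset.sum_range_sub (fun k => f (hybrid k ω)), hybrid_self, hybrid_zero]

lemma singleton_symmDiff_setOf_le (q : Fin n) :
    symmDiff {q} {i : Fin n | (q : ℕ) ≤ i} = {i : Fin n | (q : ℕ) + 1 ≤ i} := by
  ext i
  simp [Set.mem_symmDiff, Fin.ext_iff]
  omega

lemma singleton_symmDiff_setOf_succ_le (q : Fin n) :
    symmDiff {q} {i : Fin n | (q : ℕ) + 1 ≤ i} = {i : Fin n | (q : ℕ) ≤ i} := by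
  ext i
  simp [Set.mem_symmDiff, Fin.ext_iff]
  omega

lemma hybrid_succ_swapOn_singleton (q : Fin n) (ω : (Fin n → E) × (Fin n → E)) :
    hybrid (q + 1) (swapOn {q} ω) = hybrid q ω := by
  rw [hybrid, swapOn_swapOn, symmDiff_comm, singleton_symmDiff_setOf_succ_le, hybrid]

lemma hybrid_swapOn_singleton (q : Fin n) (ω : (Fin n → E) × (Fin n → E)) :
    hybrid q (swapOn {q} ω) = hybrid (q + 1) ω := by
  rw [hybrid, swapOn_swapOn, symmDiff_comm, singleton_symmDiff_setOf_le, hybrid]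

lemma fst_swapOn_singleton_swapOn_setOf_le (q : Fin n) (ω : (Fin n → E) × (Fin n → E)) :
    (swapOn {q} (swapOn {i : Fin n | (q : ℕ) ≤ i} ω)).1 = hybrid (q + 1) ω := by
  rw [swapOn_swapOn, singleton_symmDiff_setOf_le, hybrid]

end Hybrid

section Increments

variable {n : ℕ} {E : Type*} [MeasurableSpace E] (μ : Fin n → Measure E)
  [∀ i, IsFiniteMeasure (μ i)] {f : (Fin n → E) → ℝ}

lemma memLp_comp_fst_swapOn (hf : MemLp f 2 (Measure.pi μ)) (s : Set (Fin n)) :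
    MemLp (fun ω => f (swapOn s ω).1) 2 ((Measure.pi μ).prod (Measure.pi μ)) :=
  (hf.comp_fst _).comp_measurePreserving (measurePreserving_swapOn μ s)

lemma memLp_comp_hybrid (hf : MemLp f 2 (Measure.pi μ)) (k : ℕ) :
    MemLp (fun ω => f (hybrid k ω)) 2 ((Measure.pi μ).prod (Measure.pi μ)) :=
  memLp_comp_fst_swapOn μ hf _

lemma integral_mul_sub_hybrid_le (hf : MemLp f 2 (Measure.pi μ)) (q : Fin n) :
    ∫ ω, f ω.1 * (f (hybrid (q + 1) ω) - f (hybrid q ω)) ∂((Measure.pi μ).prod (Measure.pi μ)) ≤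
      ∫ ω, max 0 (f ω.1 - f (Function.update ω.1 q (ω.2 q))) ^ 2
        ∂((Measure.pi μ).prod (Measure.pi μ)) := by
  simp_rw [← fst_swapOn_singleton]
  set Δ := fun ω => f (hybrid (q + 1) ω) - f (hybrid q ω)
  set D := fun ω : (Fin n → E) × (Fin n → E) => f ω.1 - f (swapOn {q} ω).1
  have hΔ : MemLp Δ 2 ((Measure.pi μ).prod (Measure.pi μ)) :=
    (memLp_comp_hybrid μ hf _).sub (memLp_comp_hybrid μ hf _)
  have hD : MemLp D 2 ((Measure.pi μ).prod (Measure.pi μ)) :=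
    (hf.comp_fst _).sub (memLp_comp_fst_swapOn μ hf _)
  have hΔ_swap : ∀ ω, Δ (swapOn {q} ω) = -Δ ω := fun ω => by
    simp only [Δ, hybrid_succ_swapOn_singleton, hybrid_swapOn_singleton, neg_sub]
  have hD_swap : ∀ ω, D (swapOn {q} ω) = -D ω := fun ω => by
    simp only [D, swapOn_swapOn, symmDiff_self, Set.bot_eq_empty, swapOn_empty, neg_sub]
  have hD_shift : ∀ ω, D (swapOn {i : Fin n | (q : ℕ) ≤ i} ω) = -Δ ω := fun ω => by
    simp only [D, Δ, fst_swapOn_singleton_swapOn_setOf_le, neg_sub]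
    rfl
  have hsq : ∫ ω, D ω ^ 2 ∂((Measure.pi μ).prod (Measure.pi μ)) =
      ∫ ω, Δ ω ^ 2 ∂((Measure.pi μ).prod (Measure.pi μ)) := by
    rw [← (measurePreserving_swapOn μ {i : Fin n | (q : ℕ) ≤ i}).integral_comp']
    simp_rw [hD_shift, neg_sq]
  have key := calc
    2 * (2 * ∫ ω, f ω.1 * Δ ω ∂((Measure.pi μ).prod (Measure.pi μ)))
        = 2 * ∫ ω, D ω * Δ ω ∂((Measure.pi μ).prod (Measure.pi μ)) := by
      rw [two_mul_integral_mul_eq_of_comp_eq_neg (measurePreserving_swapOn μ {q})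
        (hf.comp_fst _) hΔ hΔ_swap]
    _ ≤ ∫ ω, D ω ^ 2 ∂((Measure.pi μ).prod (Measure.pi μ)) +
          ∫ ω, Δ ω ^ 2 ∂((Measure.pi μ).prod (Measure.pi μ)) :=
      two_mul_integral_mul_le_add_integral_sq hD hΔ
    _ = 4 * ∫ ω, max 0 (D ω) ^ 2 ∂((Measure.pi μ).prod (Measure.pi μ)) := by
      rw [← hsq, integral_sq_eq_two_mul_integral_max_zero_sq (measurePreserving_swapOn μ {q})
        hD hD_swap]
      ring
  linarith

end Increments

theorem efron_stein_general (n : ℕ) (μs : Fin n → Measure ℝ)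
    [∀ q, IsProbabilityMeasure (μs q)] (f : (Fin n → ℝ) → ℝ)
    (hL2 : MemLp f 2 (Measure.pi μs)) :
    ProbabilityTheory.variance (fun ω : (Fin n → ℝ) × (Fin n → ℝ) => f ω.1)
        ((Measure.pi μs).prod (Measure.pi μs)) ≤
      ∑ q : Fin n, ∫ ω, (max 0 (f ω.1 - f (Function.update ω.1 q (ω.2 q)))) ^ 2
        ∂((Measure.pi μs).prod (Measure.pi μs)) := by
  have hint : ∀ q : Fin n, Integrable (fun ω => f ω.1 * (f (hybrid (q + 1) ω) - f (hybrid q ω)))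
      ((Measure.pi μs).prod (Measure.pi μs)) := fun q =>
    (hL2.comp_fst _).integrable_mul ((memLp_comp_hybrid μs hL2 _).sub (memLp_comp_hybrid μs hL2 _))
  rw [variance_comp_fst_eq_integral_mul_sub hL2]
  simp_rw [sub_eq_sum_hybrid f, Finset.mul_sum]
  rw [integral_finsetSum _ fun q _ => hint q]
  exact Finset.sum_le_sum fun q _ => integral_mul_sub_hybrid_le μs hL2 q

/-- Efron–Stein inequality: for independent coordinates
`X = (X₁, …, X_n)` with laws `μ₁, …, μ_n` and an independent copy `X′`, and a
square-integrable `Z = f(X)`,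
`Var(Z) ≤ ∑_q E[(max(0, Z − Z_q′))²]` where `Z_q′ = f(X` with the `q`-th coordinate
replaced by `X′_q)`. -/
theorem efron_stein (n : ℕ) (hn : 1 ≤ n) (μs : Fin n → Measure ℝ)
    [∀ q, IsProbabilityMeasure (μs q)] (f : (Fin n → ℝ) → ℝ)
    (hmeas : Measurable f) (hL2 : MemLp f 2 (Measure.pi μs)) :
    ProbabilityTheory.variance (fun ω : (Fin n → ℝ) × (Fin n → ℝ) => f ω.1)
        ((Measure.pi μs).prod (Measure.pi μs)) ≤
      ∑ q : Fin n, ∫ ω, (max 0 (f ω.1 - f (Function.update ω.1 q (ω.2 q)))) ^ 2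
        ∂((Measure.pi μs).prod (Measure.pi μs)) :=
  efron_stein_general n μs f hL2
end
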